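/- arXiv:1205.0414 — 10 statements merged into one kernel-verified Lean document; each statement's English description precedes it below -/
import Mathlib

section
/- Let X be a separable infinite-dimensional Fréchet space over 𝕂 (𝕂 = ℝ or ℂ) that admits a continuous norm. Then X is a G-space: for any two countable dense linearly independent subsets A and B of X there exists a continuous linear automorphism J of X (J invertible with continuous inverse) such that J(A) = B. -/
/-!
Choose continuous seminorms `p 0 ≤ p 1 ≤ ⋯` generating the topology, with `p 0` the given
norm, and enumerate the disjoint union of `A` and `B`. The automorphism is an infinite product
of rank-one perturbations `E k = 1 + f k ⊗ v k` of the identity, built back and forth: step `k`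
matches one more point of `A` (or of `B`) with a point of `B` (or of `A`), the functional `f k`
vanishes on the points matched so far (the new point is outside their span by linear
independence), and `v k`, supplied by density of `B` or of the current image of `A`, is so small
for `p 0, …, p k` that `E k` and `(E k)⁻¹` are `2⁻ᵏ`-close to the identity for these seminorms.
Because every `f k` is bounded by the single norm `p 0` (Hahn–Banach in the normed space
`(X, p 0)`), the partial products and their inverses are uniformly bounded for each `p n` and
converge, by completeness, to mutually inverse continuous operators; on each matched point the
sequence is eventually constant.
-/

open Filter Topology

section

variable {𝕜 X : Type*} [RCLike 𝕜] [AddCommGroup X] [Module 𝕜 X]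

theorem Submodule.exists_dual_eq_one_of_notMem {E : Type*} [NormedAddCommGroup E]
    [NormedSpace 𝕜 E] (W : Submodule 𝕜 E) [FiniteDimensional 𝕜 W] {x : E} (hx : x ∉ W) :
    ∃ f : StrongDual 𝕜 E, f x = 1 ∧ ∀ w ∈ W, f w = 0 := by
  have : IsClosed (W : Set E) := W.closed_of_finiteDimensional
  obtain ⟨g, hg⟩ := SeparatingDual.exists_eq_one (R := 𝕜)
    (mt (Submodule.Quotient.mk_eq_zero W).1 hx)
  exact ⟨g.comp W.mkQL, hg, fun w hw => by simp [(Submodule.Quotient.mk_eq_zero W).2 hw]⟩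

theorem Seminorm.exists_dual_eq_one_of_notMem (N : Seminorm 𝕜 X) (hN : ∀ x, N x = 0 → x = 0)
    (W : Submodule 𝕜 X) [FiniteDimensional 𝕜 W] {x : X} (hx : x ∉ W) :
    ∃ f : Module.Dual 𝕜 X, ∃ C, 0 ≤ C ∧ (∀ u, ‖f u‖ ≤ C * N u) ∧ f x = 1 ∧ ∀ w ∈ W, f w = 0 := by
  let := N.toSeminormedAddCommGroup
  let := NormedAddCommGroup.ofSeparation hN
  let : NormedSpace 𝕜 X := { norm_smul_le := fun a b ↦ (map_smul_eq_mul N a b).le }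
  obtain ⟨f, hfx, hfW⟩ := W.exists_dual_eq_one_of_notMem hx
  exact ⟨f, ‖f‖, norm_nonneg _, f.le_opNorm, hfx, hfW⟩

theorem LinearIndepOn.notMem_span_of_subset {A S : Set X} (hA : LinearIndepOn 𝕜 id A)
    (hS : S ⊆ A) {a : X} (ha : a ∈ A) (haS : a ∉ S) : a ∉ Submodule.span 𝕜 S := by
  simpa using (hA.mono (Set.insert_subset ha hS)).notMem_span_of_insert haS

section SeminormFamily

open scoped ComplexOrder in
theorem LocallyConvexSpace.of_real [Module ℝ X] [IsScalarTower ℝ 𝕜 X] [TopologicalSpace X]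
    [IsTopologicalAddGroup X] [LocallyConvexSpace ℝ X] : LocallyConvexSpace 𝕜 X :=
  (locallyConvexSpace_iff_zero 𝕜 X).2 <| by
    simpa only [convex_RCLike_iff_convex_real] using (locallyConvexSpace_iff_zero ℝ X).1 ‹_›

theorem exists_monotone_withSeminorms [TopologicalSpace X] [IsTopologicalAddGroup X]
    [PolynormableSpace 𝕜 X] [FirstCountableTopology X]
    (N : Seminorm 𝕜 X) (hN : Continuous N) :
    ∃ p : ℕ → Seminorm 𝕜 X, p 0 = N ∧ Monotone p ∧ WithSeminorms p := by
  obtain ⟨U, hU⟩ := (𝓝 (0 : X)).exists_antitone_basis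
  have hq := PolynormableSpace.withSeminorms 𝕜 X
  choose sr hsr hsrU using fun i => hq.hasBasis_zero_ball.mem_iff.1 (hU.mem i)
  set q : ℕ → Seminorm 𝕜 X := fun i => (sr i).1.sup fun s => s.1
  have hqc : ∀ i, Continuous (q i) := fun i => Seminorm.continuous_finsetSup fun s _ => s.2
  set p : ℕ → Seminorm 𝕜 X := fun n => N ⊔ (Finset.range n).sup q
  have hpc : ∀ n, Continuous (p n) := fun n =>
    hN.max (Seminorm.continuous_finsetSup fun i _ => hqc i)
  refine ⟨p, by simp [p], fun m n hmn => sup_le_sup_left (Finset.sup_mono (by simpa using hmn)) N,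
    (SeminormFamily.withSeminorms_iff_nhds_eq_iInf _).2 (le_antisymm ?_ ?_)⟩
  · exact le_iInf fun n => ((hpc n).tendsto' 0 0 (map_zero _)).le_comap
  · refine hU.toHasBasis.ge_iff.2 fun i _ => mem_iInf_of_mem (i + 1) <|
      mem_comap.2 ⟨Set.Iio (sr i).2, Iio_mem_nhds (hsr i), fun x hx => hsrU i ?_⟩
    have hle : q i ≤ p (i + 1) := (Finset.le_sup (Finset.self_mem_range_succ i)).trans le_sup_right
    exact (Seminorm.mem_ball_zero _).2 ((hle x).trans_lt hx)

end SeminormFamily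

section NearIdentity

variable [TopologicalSpace X]

def IsNearIdentity (q : Seminorm 𝕜 X) (ε : ℝ) (E : X ≃L[𝕜] X) : Prop :=
  ∀ x, q (E x - x) ≤ ε * q x ∧ q (E.symm x - x) ≤ ε * q x

variable {q : Seminorm 𝕜 X} {ε : ℝ} {E : X ≃L[𝕜] X}

theorem IsNearIdentity.symm (h : IsNearIdentity q ε E) : IsNearIdentity q ε E.symm :=
  fun x => ⟨(h x).2, by simpa using (h x).1⟩

theorem IsNearIdentity.seminorm_apply_le (h : IsNearIdentity q ε E) (x : X) :
    q (E x) ≤ (1 + ε) * q x :=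
  calc q (E x) = q ((E x - x) + x) := by rw [sub_add_cancel]
    _ ≤ q (E x - x) + q x := map_add_le_add _ _ _
    _ ≤ (1 + ε) * q x := by linarith [(h x).1]

theorem seminorm_apply_le_exp_tsum {J : ℕ → X ≃L[𝕜] X} (hJ0 : J 0 = .refl 𝕜 X) {δ : ℕ → ℝ}
    (hδ0 : ∀ m, 0 ≤ δ m) (hδ : Summable δ)
    (hJ : ∀ m, IsNearIdentity q (δ m) ((J m).symm.trans (J (m + 1)))) (m : ℕ) (x : X) :
    q (J m x) ≤ Real.exp (∑' k, δ k) * q x ∧ q ((J m).symm x) ≤ Real.exp (∑' k, δ k) * q x := by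
  set P : ℕ → ℝ := fun m => ∏ k ∈ Finset.range m, (1 + δ k)
  have hle_prod : ∀ m x, q (J m x) ≤ P m * q x ∧ q ((J m).symm x) ≤ P m * q x := by
    intro m
    induction m with
    | zero => simp [P, hJ0]
    | succ m ih =>
      intro x
      have hP : 0 ≤ P m := Finset.prod_nonneg fun k _ => by linarith [hδ0 k]
      simp only [P, Finset.prod_range_succ]
      constructor
      · calc q (J (m + 1) x) = q (((J m).symm.trans (J (m + 1))) (J m x)) := by simp
          _ ≤ (1 + δ m) * (P m * q x) := ((hJ m).seminorm_apply_le _).trans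
              (mul_le_mul_of_nonneg_left (ih x).1 (by linarith [hδ0 m]))
          _ = _ := by ring
      · calc q ((J (m + 1)).symm x)
            = q ((J m).symm (((J m).symm.trans (J (m + 1))).symm x)) := by simp
          _ ≤ P m * ((1 + δ m) * q x) :=
              (ih _).2.trans (mul_le_mul_of_nonneg_left ((hJ m).symm.seminorm_apply_le x) hP)
          _ = _ := by ring
  have hP : P m ≤ Real.exp (∑' k, δ k) :=
    (Real.prod_one_add_le_exp_sum _ hδ0).trans
      (Real.exp_le_exp.2 (hδ.sum_le_tsum _ fun k _ => hδ0 k))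
  have hq := apply_nonneg q x
  exact ⟨(hle_prod m x).1.trans (by gcongr), (hle_prod m x).2.trans (by gcongr)⟩

def IsNearIdentityUpTo (p : ℕ → Seminorm 𝕜 X) (k : ℕ) (E : X ≃L[𝕜] X) : Prop :=
  ∀ n, ∃ ε, 0 ≤ ε ∧ IsNearIdentity (p n) ε E ∧ (n ≤ k → ε ≤ (1 / 2) ^ k)

variable {p : ℕ → Seminorm 𝕜 X} {k : ℕ}

theorem isNearIdentityUpTo_refl : IsNearIdentityUpTo p k (.refl 𝕜 X) :=
  fun _ => ⟨0, le_rfl, fun x => by simp, fun _ => by positivity⟩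

theorem IsNearIdentityUpTo.symm {E : X ≃L[𝕜] X} (h : IsNearIdentityUpTo p k E) :
    IsNearIdentityUpTo p k E.symm :=
  fun n => (h n).imp fun _ ⟨hε, hE, hk⟩ => ⟨hε, hE.symm, hk⟩

theorem exists_summable_of_isNearIdentityUpTo {E : ℕ → X ≃L[𝕜] X}
    (h : ∀ k, IsNearIdentityUpTo p k (E k)) (n : ℕ) :
    ∃ δ : ℕ → ℝ, (∀ m, 0 ≤ δ m) ∧ Summable δ ∧ ∀ m, IsNearIdentity (p n) (δ m) (E m) := by
  choose δ hδ0 hδ hδk using fun m => h m n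
  refine ⟨δ, hδ0, summable_geometric_two.of_norm_bounded_eventually ?_, hδ⟩
  rw [Nat.cofinite_eq_atTop, eventually_atTop]
  exact ⟨n, fun m hm => (Real.norm_of_nonneg (hδ0 m)).trans_le (hδk m hm)⟩

variable [IsTopologicalAddGroup X] [ContinuousSMul 𝕜 X]

def rankOneEquiv (f : StrongDual 𝕜 X) (v : X) (h : ‖f v‖ < 1) : X ≃L[𝕜] X :=
  have hfv : (1 + f v)⁻¹ * (1 + f v) = 1 := inv_mul_cancel₀ fun h0 => by
    simp [eq_neg_of_add_eq_zero_right h0] at h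
  .equivOfInverse (1 + f.smulRight v) (1 - ((1 + f v)⁻¹ • f).smulRight v)
    (fun x => by simp; linear_combination (norm := module) -(f x • hfv • v))
    (fun x => by simp; linear_combination (norm := module) -(f x • hfv • v))

variable {f : StrongDual 𝕜 X} {v : X}

@[simp] theorem rankOneEquiv_apply (h : ‖f v‖ < 1) (x : X) :
    rankOneEquiv f v h x = x + f x • v := rfl

@[simp] theorem rankOneEquiv_symm_apply (h : ‖f v‖ < 1) (x : X) :
    (rankOneEquiv f v h).symm x = x - ((1 + f v)⁻¹ * f x) • v := rfl

theorem isNearIdentity_rankOneEquiv {C : ℝ} (hf : ∀ u, ‖f u‖ ≤ C * q u) (hfv : ‖f v‖ ≤ 1 / 2) :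
    IsNearIdentity q (2 * C * q v) (rankOneEquiv f v (hfv.trans_lt (by norm_num))) := by
  have hinv : ‖(1 + f v)⁻¹‖ ≤ 2 := by
    rw [norm_inv]
    refine inv_le_of_inv_le₀ (by norm_num) ?_
    have := norm_sub_norm_le (1 : 𝕜) (-f v)
    rw [sub_neg_eq_add, norm_neg, norm_one] at this
    linarith
  intro x
  have hx := hf x
  have hq := apply_nonneg q v
  constructor
  · simp only [rankOneEquiv_apply, add_sub_cancel_left, map_smul_eq_mul]
    nlinarith [norm_nonneg (f x)]
  · simp only [rankOneEquiv_symm_apply, sub_sub_cancel_left, map_neg_eq_map, map_smul_eq_mul,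
      norm_mul]
    calc ‖(1 + f v)⁻¹‖ * ‖f x‖ * q v ≤ 2 * (C * q x) * q v := by gcongr
      _ = 2 * C * q v * q x := by ring

end NearIdentity

section Limit

variable [UniformSpace X] [IsUniformAddGroup X] {ι : Type*} {p : SeminormFamily 𝕜 X ι}

theorem WithSeminorms.cauchySeq_of_summable (hp : WithSeminorms p) {u : ℕ → X}
    (h : ∀ i, ∃ d : ℕ → ℝ, Summable d ∧ ∀ m, p i (u m - u (m + 1)) ≤ d m) : CauchySeq u := by
  rw [CauchySeq, (SeminormFamily.withSeminorms_iff_uniformSpace_eq_iInf p).1 hp,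
    cauchy_iInf_uniformSpace']
  intro i
  obtain ⟨d, hd, hu⟩ := h i
  let := (p i).toSeminormedAddCommGroup
  exact cauchySeq_of_dist_le_of_summable d (fun m => (dist_eq_norm _ _).trans_le (hu m)) hd

theorem WithSeminorms.leftInverse_of_tendsto [T2Space X] (hp : WithSeminorms p)
    {S T : ℕ → X →L[𝕜] X} {L M : X →L[𝕜] X} (hS : ∀ x, Tendsto (fun m => S m x) atTop (𝓝 (L x)))
    (hT : ∀ x, Tendsto (fun m => T m x) atTop (𝓝 (M x)))
    (hTb : ∀ i, ∃ C, ∀ m x, p i (T m x) ≤ C * p i x)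
    (hTS : ∀ m, Function.LeftInverse (T m) (S m)) : Function.LeftInverse M L := by
  intro x
  refine tendsto_nhds_unique (hT (L x)) ((hp.tendsto_nhds _ x).2 fun i ε hε => ?_)
  obtain ⟨C, hC⟩ := hTb i
  have h0 : Tendsto (fun m => C * p i (L x - S m x)) atTop (𝓝 0) := by
    simpa using ((hp.continuous_seminorm i).tendsto _ |>.comp ((hS x).const_sub (L x))).const_mul C
  refine (h0.eventually (gt_mem_nhds hε)).mono fun m hm => ?_
  calc p i (T m (L x) - x) = p i (T m (L x - S m x)) := by rw [(T m).map_sub, hTS m x]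
    _ ≤ C * p i (L x - S m x) := hC m _
    _ < ε := hm

variable [ContinuousSMul 𝕜 X] [CompleteSpace X] [T2Space X]

theorem WithSeminorms.exists_tendsto_of_summable (hp : WithSeminorms p) (T : ℕ → X →L[𝕜] X)
    (hT : ∀ i, ∃ C, ∀ m x, p i (T m x) ≤ C * p i x)
    (hsum : ∀ i x, ∃ d : ℕ → ℝ, Summable d ∧ ∀ m, p i (T m x - T (m + 1) x) ≤ d m) :
    ∃ L : X →L[𝕜] X, ∀ x, Tendsto (fun m => T m x) atTop (𝓝 (L x)) := by
  choose f hf using fun x => cauchySeq_tendsto_of_complete (hp.cauchySeq_of_summable (hsum · x))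
  let L := linearMapOfTendsto f (fun m => (T m : X →ₗ[𝕜] X)) (tendsto_pi_nhds.2 hf)
  refine ⟨⟨L, hp.continuous_of_isBounded hp L (.of_real fun i => ?_)⟩, hf⟩
  obtain ⟨C, hC⟩ := hT i
  refine ⟨{i}, C, fun x => ?_⟩
  rw [Finset.sup_singleton]
  exact le_of_tendsto ((hp.continuous_seminorm i).tendsto _ |>.comp (hf x))
    (Eventually.of_forall fun m => hC m x)

theorem WithSeminorms.exists_tendsto_of_isNearIdentity (hp : WithSeminorms p)
    {J : ℕ → X ≃L[𝕜] X} (hJ0 : J 0 = .refl 𝕜 X)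
    (hJ : ∀ i, ∃ δ : ℕ → ℝ, (∀ m, 0 ≤ δ m) ∧ Summable δ ∧
      ∀ m, IsNearIdentity (p i) (δ m) ((J m).symm.trans (J (m + 1)))) :
    ∃ L : X ≃L[𝕜] X, ∀ x, Tendsto (fun m => J m x) atTop (𝓝 (L x)) := by
  choose δ hδ0 hδ hJδ using hJ
  have hbound i := seminorm_apply_le_exp_tsum hJ0 (hδ0 i) (hδ i) (hJδ i)
  have hJb : ∀ i, ∃ C, ∀ m x, p i (J m x) ≤ C * p i x := fun i => ⟨_, fun m x => (hbound i m x).1⟩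
  have hKb : ∀ i, ∃ C, ∀ m x, p i ((J m).symm x) ≤ C * p i x :=
    fun i => ⟨_, fun m x => (hbound i m x).2⟩
  obtain ⟨L, hL⟩ := hp.exists_tendsto_of_summable (fun m => J m) hJb fun i x =>
    ⟨fun m => δ i m * (Real.exp (∑' k, δ i k) * p i x), (hδ i).mul_right _, fun m =>
      calc p i (J m x - J (m + 1) x)
          = p i (((J m).symm.trans (J (m + 1))) (J m x) - J m x) := by
            rw [← map_neg_eq_map]; simp
        _ ≤ δ i m * p i (J m x) := (hJδ i m _).1
        _ ≤ _ := mul_le_mul_of_nonneg_left (hbound i m x).1 (hδ0 i m)⟩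
  obtain ⟨M, hM⟩ := hp.exists_tendsto_of_summable (fun m => (J m).symm) hKb fun i x =>
    ⟨fun m => Real.exp (∑' k, δ i k) * (δ i m * p i x), ((hδ i).mul_right _).mul_left _, fun m =>
      calc p i ((J m).symm x - (J (m + 1)).symm x)
          = p i ((J m).symm (((J m).symm.trans (J (m + 1))).symm x - x)) := by
            rw [← map_neg_eq_map]; simp
        _ ≤ Real.exp (∑' k, δ i k) * p i (((J m).symm.trans (J (m + 1))).symm x - x) :=
          (hbound i m _).2
        _ ≤ _ := mul_le_mul_of_nonneg_left (hJδ i m x).2 (Real.exp_nonneg _)⟩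
  exact ⟨.equivOfInverse L M (hp.leftInverse_of_tendsto hL hM hKb fun m => (J m).symm_apply_apply)
    (hp.leftInverse_of_tendsto hM hL hJb fun m => (J m).apply_symm_apply), hL⟩

end Limit

section Steps

variable [TopologicalSpace X] [IsTopologicalAddGroup X] [ContinuousSMul 𝕜 X]
  {p : ℕ → Seminorm 𝕜 X} {A B : Set X}

theorem exists_isNearIdentityUpTo_apply_mem (hp : WithSeminorms p) (hmono : Monotone p)
    (hp0 : ∀ x, p 0 x = 0 → x = 0) {D : Set X} (hD : Dense D) (W : Submodule 𝕜 X)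
    [FiniteDimensional 𝕜 W] {y : X} (hy : y ∉ W) (k : ℕ) :
    ∃ E : X ≃L[𝕜] X, IsNearIdentityUpTo p k E ∧ E y ∈ D ∧ ∀ w ∈ W, E w = w := by
  obtain ⟨f₀, C, hC, hf₀, hfy, hfW⟩ := (p 0).exists_dual_eq_one_of_notMem hp0 W hy
  let f : StrongDual 𝕜 X := ⟨f₀, hp.continuous_normedSpace_rng 𝕜 f₀
    ⟨{0}, ⟨C, hC⟩, by rw [Finset.sup_singleton]; exact fun u => hf₀ u⟩⟩
  have hf n u : ‖f u‖ ≤ C * p n u :=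
    (hf₀ u).trans (mul_le_mul_of_nonneg_left (hmono (Nat.zero_le n) u) hC)
  have hC1 : 0 < 2 * C + 1 := by linarith
  set r : ℝ := (1 / 2) ^ k / (2 * C + 1)
  have hr : 0 < r := div_pos (by positivity) hC1
  obtain ⟨d, hdD, hd⟩ : ∃ d ∈ D, p k (d - y) < r :=
    hD.exists_mem_open (isOpen_lt ((hp.continuous_seminorm k).comp (continuous_sub_right y))
      continuous_const) ⟨y, show p k (y - y) < r by simpa using hr⟩
  have hsmall n (hn : n ≤ k) : 2 * C * p n (d - y) ≤ (1 / 2) ^ k :=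
    calc 2 * C * p n (d - y) ≤ (2 * C + 1) * p k (d - y) := by
          nlinarith [hmono hn (d - y), apply_nonneg (p n) (d - y)]
      _ ≤ (2 * C + 1) * r := by gcongr
      _ = (1 / 2) ^ k := mul_div_cancel₀ _ hC1.ne'
  have hfv : ‖f (d - y)‖ ≤ 1 / 2 := by
    have := hsmall 0 (Nat.zero_le k)
    have : (1 / 2 : ℝ) ^ k ≤ 1 := pow_le_one₀ (by norm_num) (by norm_num)
    linarith [hf 0 (d - y)]
  refine ⟨rankOneEquiv f (d - y) (hfv.trans_lt (by norm_num)), fun n =>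
    ⟨2 * C * p n (d - y), by positivity, isNearIdentity_rankOneEquiv (hf n) hfv, hsmall n⟩, ?_, ?_⟩
  · simpa [f, hfy] using hdD
  · intro w hw
    simp [f, hfW w hw]

theorem exists_forward_step (hp : WithSeminorms p) (hmono : Monotone p)
    (hp0 : ∀ x, p 0 x = 0 → x = 0) (hA : LinearIndepOn 𝕜 id A) (hBd : Dense B)
    {J : X ≃L[𝕜] X} {F : Finset X} (hFA : ↑F ⊆ A) (hFB : J '' F ⊆ B) {a : X} (ha : a ∈ A)
    (k : ℕ) : ∃ E : X ≃L[𝕜] X, IsNearIdentityUpTo p k E ∧ E (J a) ∈ B ∧ ∀ x ∈ F, E (J x) = J x := by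
  by_cases haF : a ∈ F
  · exact ⟨.refl 𝕜 X, isNearIdentityUpTo_refl, hFB ⟨a, haF, rfl⟩, fun _ _ => rfl⟩
  have : FiniteDimensional 𝕜 (Submodule.span 𝕜 (J '' F)) :=
    FiniteDimensional.span_of_finite 𝕜 (F.finite_toSet.image J)
  have hJa : J a ∉ Submodule.span 𝕜 (J '' F) := fun h => hA.notMem_span_of_subset hFA ha haF
    ((Submodule.apply_mem_span_image_iff_mem_span (f := (J : X →ₗ[𝕜] X)) J.injective).1 h)
  obtain ⟨E, hE, hEB, hEW⟩ := exists_isNearIdentityUpTo_apply_mem hp hmono hp0 hBd _ hJa k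
  exact ⟨E, hE, hEB, fun x hx => hEW _ (Submodule.subset_span ⟨x, hx, rfl⟩)⟩

theorem exists_backward_step (hp : WithSeminorms p) (hmono : Monotone p)
    (hp0 : ∀ x, p 0 x = 0 → x = 0) (hB : LinearIndepOn 𝕜 id B) (hAd : Dense A)
    {J : X ≃L[𝕜] X} {F : Finset X} (hFA : ↑F ⊆ A) (hFB : J '' F ⊆ B) {b : X} (hb : b ∈ B)
    (k : ℕ) : ∃ a ∈ A, ∃ E : X ≃L[𝕜] X, IsNearIdentityUpTo p k E ∧ E (J a) = b ∧
      ∀ x ∈ F, E (J x) = J x := by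
  by_cases hbF : b ∈ J '' F
  · obtain ⟨x, hx, rfl⟩ := hbF
    exact ⟨x, hFA hx, .refl 𝕜 X, isNearIdentityUpTo_refl, rfl, fun _ _ => rfl⟩
  have : FiniteDimensional 𝕜 (Submodule.span 𝕜 (J '' F)) :=
    FiniteDimensional.span_of_finite 𝕜 (F.finite_toSet.image J)
  obtain ⟨E, hE, ⟨a, ha, hEb⟩, hEW⟩ := exists_isNearIdentityUpTo_apply_mem hp hmono hp0
    (J.surjective.denseRange.dense_image J.continuous hAd) _
    (hB.notMem_span_of_subset hFB hb hbF) k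
  exact ⟨a, ha, E.symm, hE.symm, by rw [hEb, E.symm_apply_apply],
    fun x hx => E.symm_apply_eq.2 (hEW _ (Submodule.subset_span ⟨x, hx, rfl⟩)).symm⟩

theorem exists_next_stage (hp : WithSeminorms p) (hmono : Monotone p)
    (hp0 : ∀ x, p 0 x = 0 → x = 0) (hA : LinearIndepOn 𝕜 id A) (hB : LinearIndepOn 𝕜 id B)
    (hAd : Dense A) (hBd : Dense B) {J : X ≃L[𝕜] X} {F : Finset X} (hFA : ↑F ⊆ A)
    (hFB : J '' F ⊆ B) (k : ℕ) (t : A ⊕ B) :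
    ∃ J' : X ≃L[𝕜] X, ∃ F' : Finset X, (↑F' ⊆ A ∧ J' '' F' ⊆ B) ∧ F ⊆ F' ∧
      (∀ x ∈ F, J' x = J x) ∧ IsNearIdentityUpTo p k (J.symm.trans J') ∧
      t.elim (fun a => ↑a ∈ F') (fun b => ↑b ∈ J' '' F') := by
  suffices ∃ a ∈ A, ∃ E : X ≃L[𝕜] X, IsNearIdentityUpTo p k E ∧ E (J a) ∈ B ∧
      (∀ x ∈ F, E (J x) = J x) ∧ t.elim (fun a' : A => (a' : X) = a) (fun b : B => E (J a) = b) by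
    classical
    obtain ⟨a, ha, E, hE, hEa, hEF, ht⟩ := this
    have hJE : J.symm.trans (J.trans E) = E := by ext; simp
    refine ⟨J.trans E, insert a F, ⟨?_, ?_⟩, F.subset_insert a, hEF, by rwa [hJE], ?_⟩
    · simpa [Set.insert_subset_iff] using ⟨ha, hFA⟩
    · rintro _ ⟨x, hx, rfl⟩
      rcases Finset.mem_insert.1 hx with rfl | hx
      · exact hEa
      · simpa [hEF x hx] using hFB ⟨x, hx, rfl⟩
    · cases t with
      | inl a' => exact Finset.mem_insert.2 (.inl ht)
      | inr b => exact ⟨a, Finset.mem_insert_self a F, ht⟩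
  cases t with
  | inl a =>
    obtain ⟨E, hE, hEa, hEF⟩ := exists_forward_step hp hmono hp0 hA hBd hFA hFB a.2 k
    exact ⟨a, a.2, E, hE, hEa, hEF, rfl⟩
  | inr b =>
    obtain ⟨a, ha, E, hE, hEa, hEF⟩ := exists_backward_step hp hmono hp0 hB hAd hFA hFB b.2 k
    exact ⟨a, ha, E, hE, hEa ▸ b.2, hEF, hEa⟩

end Steps

theorem exists_seq_of_forall_exists {α : Type*} (P : α → Prop) (R : ℕ → α → α → Prop) {a : α}
    (ha : P a) (h : ∀ k x, P x → ∃ y, P y ∧ R k x y) :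
    ∃ s : ℕ → α, s 0 = a ∧ ∀ k, P (s k) ∧ R k (s k) (s (k + 1)) := by
  choose! g hgP hgR using h
  let s : ℕ → α := fun k => Nat.rec a g k
  have hs : ∀ k, P (s k) := fun k => by
    induction k with
    | zero => exact ha
    | succ k ih => exact hgP k _ ih
  exact ⟨s, rfl, fun k => ⟨hs k, hgR k _ (hs k)⟩⟩

section BackAndForthSeq

variable [TopologicalSpace X]

structure IsBackAndForth (p : ℕ → Seminorm 𝕜 X) (A B : Set X) (J : ℕ → X ≃L[𝕜] X)
    (F : ℕ → Finset X) : Prop where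
  zero : J 0 = .refl 𝕜 X
  isNearIdentityUpTo : ∀ k, IsNearIdentityUpTo p k ((J k).symm.trans (J (k + 1)))
  subset : ∀ k, ↑(F k) ⊆ A
  image_subset : ∀ k, J k '' F k ⊆ B
  mono : ∀ k, F k ⊆ F (k + 1)
  apply_succ : ∀ k, ∀ x ∈ F k, J (k + 1) x = J k x
  subset_iUnion : A ⊆ ⋃ k, ↑(F k)
  subset_iUnion_image : B ⊆ ⋃ k, J k '' F k

namespace IsBackAndForth

variable {p : ℕ → Seminorm 𝕜 X} {A B : Set X} {J : ℕ → X ≃L[𝕜] X} {F : ℕ → Finset X}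

theorem apply_eq (h : IsBackAndForth p A B J F) {k m : ℕ} (hkm : k ≤ m) {x : X} (hx : x ∈ F k) :
    J m x = J k x := by
  induction m, hkm using Nat.le_induction with
  | base => rfl
  | succ m hkm ih => rw [h.apply_succ m x (monotone_nat_of_le_succ h.mono hkm hx), ih]

theorem image_eq [T2Space X] (h : IsBackAndForth p A B J F) {L : X → X}
    (hL : ∀ x, Tendsto (fun m => J m x) atTop (𝓝 (L x))) : L '' A = B := by
  have hLF {k x} (hx : x ∈ F k) : L x = J k x :=
    tendsto_nhds_unique (hL x) (tendsto_const_nhds.congr'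
      (eventually_atTop.2 ⟨k, fun m hm => (h.apply_eq hm hx).symm⟩))
  refine (Set.image_subset_iff.2 fun x hx => ?_).antisymm fun y hy => ?_
  · obtain ⟨k, hk⟩ := Set.mem_iUnion.1 (h.subset_iUnion hx)
    rw [Set.mem_preimage, hLF hk]
    exact h.image_subset k ⟨x, hk, rfl⟩
  · obtain ⟨k, x, hx, rfl⟩ := Set.mem_iUnion.1 (h.subset_iUnion_image hy)
    exact ⟨x, h.subset k hx, hLF hx⟩

end IsBackAndForth

variable [IsTopologicalAddGroup X] [ContinuousSMul 𝕜 X] {p : ℕ → Seminorm 𝕜 X} {A B : Set X}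

theorem exists_isBackAndForth (hp : WithSeminorms p) (hmono : Monotone p)
    (hp0 : ∀ x, p 0 x = 0 → x = 0) (hA : LinearIndepOn 𝕜 id A) (hB : LinearIndepOn 𝕜 id B)
    (hAd : Dense A) (hBd : Dense B) (hAc : A.Countable) (hBc : B.Countable) :
    ∃ J F, IsBackAndForth p A B J F := by
  have := hAc.to_subtype
  have := hBc.to_subtype
  have : Nonempty (A ⊕ B) := ⟨.inl ⟨_, hAd.nonempty.some_mem⟩⟩
  obtain ⟨t, ht⟩ := exists_surjective_nat (A ⊕ B)
  obtain ⟨s, hs0, hs⟩ := exists_seq_of_forall_exists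
    (fun σ : (X ≃L[𝕜] X) × Finset X => ↑σ.2 ⊆ A ∧ σ.1 '' σ.2 ⊆ B)
    (fun k σ σ' => σ.2 ⊆ σ'.2 ∧ (∀ x ∈ σ.2, σ'.1 x = σ.1 x) ∧
      IsNearIdentityUpTo p k (σ.1.symm.trans σ'.1) ∧
      (t k).elim (fun a => ↑a ∈ σ'.2) (fun b => ↑b ∈ σ'.1 '' σ'.2))
    (a := (.refl 𝕜 X, ∅)) (by simp) fun k σ hσ => by
      obtain ⟨J', F', hP, hR⟩ := exists_next_stage hp hmono hp0 hA hB hAd hBd hσ.1 hσ.2 k (t k)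
      exact ⟨(J', F'), hP, hR⟩
  refine ⟨fun k => (s k).1, fun k => (s k).2, by rw [hs0], fun k => (hs k).2.2.2.1,
    fun k => (hs k).1.1, fun k => (hs k).1.2, fun k => (hs k).2.1, fun k => (hs k).2.2.1,
    fun a ha => ?_, fun b hb => ?_⟩
  · obtain ⟨k, hk⟩ := ht (.inl ⟨a, ha⟩)
    exact Set.mem_iUnion.2 ⟨k + 1, by simpa [hk] using (hs k).2.2.2.2⟩
  · obtain ⟨k, hk⟩ := ht (.inr ⟨b, hb⟩)
    exact Set.mem_iUnion.2 ⟨k + 1, by simpa [hk] using (hs k).2.2.2.2⟩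

end BackAndForthSeq

end

theorem gspace_of_continuous_norm_general
    (𝕜 : Type*) [RCLike 𝕜] (X : Type*) [AddCommGroup X] [Module 𝕜 X]
    [Module ℝ X] [IsScalarTower ℝ 𝕜 X]
    -- X is a Fréchet space: a complete metrizable locally convex TVS
    [UniformSpace X] [IsUniformAddGroup X] [ContinuousSMul 𝕜 X]
    [LocallyConvexSpace ℝ X] [CompleteSpace X] [TopologicalSpace.MetrizableSpace X]
    -- X possesses a continuous norm
    (hnorm : ∃ N : Seminorm 𝕜 X, Continuous N ∧ ∀ x : X, N x = 0 → x = 0)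
    -- A and B are countable (infinite) dense linearly independent subsets of X
    (A B : Set X)
    (hAc : A.Countable) (hAd : Dense A)
    (hAli : LinearIndependent 𝕜 ((↑) : A → X))
    (hBc : B.Countable) (hBd : Dense B)
    (hBli : LinearIndependent 𝕜 ((↑) : B → X)) :
    ∃ J : X ≃L[𝕜] X, J '' A = B := by
  obtain ⟨N, hNc, hN0⟩ := hnorm
  have := LocallyConvexSpace.of_real (𝕜 := 𝕜) (X := X)
  have : ContinuousSMul ℝ X := IsScalarTower.continuousSMul 𝕜
  obtain ⟨p, rfl, hmono, hp⟩ := exists_monotone_withSeminorms N hNc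
  obtain ⟨J, F, hJF⟩ := exists_isBackAndForth hp hmono hN0 hAli hBli hAd hBd hAc hBc
  obtain ⟨L, hL⟩ := hp.exists_tendsto_of_isNearIdentity hJF.zero
    (exists_summable_of_isNearIdentityUpTo hJF.isNearIdentityUpTo)
  exact ⟨L, hJF.image_eq hL⟩

/-- A separable infinite-dimensional Fréchet space admitting a continuous
norm is a G-space: `GL(X)` acts transitively on the countable dense linearly
independent subsets of `X`. -/
theorem gspace_of_continuous_norm
    (𝕜 : Type*) [RCLike 𝕜] (X : Type*) [AddCommGroup X] [Module 𝕜 X]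
    [Module ℝ X] [IsScalarTower ℝ 𝕜 X]
    -- X is a Fréchet space: a complete metrizable locally convex TVS
    [UniformSpace X] [IsUniformAddGroup X] [ContinuousSMul 𝕜 X]
    [LocallyConvexSpace ℝ X] [CompleteSpace X] [TopologicalSpace.MetrizableSpace X]
    -- separable and infinite dimensional
    [TopologicalSpace.SeparableSpace X] (hinf : ¬ FiniteDimensional 𝕜 X)
    -- X possesses a continuous norm
    (hnorm : ∃ N : Seminorm 𝕜 X, Continuous N ∧ ∀ x : X, N x = 0 → x = 0)
    -- A and B are countable (infinite) dense linearly independent subsets of X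
    (A B : Set X)
    (hAc : A.Countable) (hAi : A.Infinite) (hAd : Dense A)
    (hAli : LinearIndependent 𝕜 ((↑) : A → X))
    (hBc : B.Countable) (hBi : B.Infinite) (hBd : Dense B)
    (hBli : LinearIndependent 𝕜 ((↑) : B → X)) :
    ∃ J : X ≃L[𝕜] X, J '' A = B :=
  gspace_of_continuous_norm_general 𝕜 X hnorm A B hAc hAd hAli hBc hBd hBli
end

section
/- Let X be a separable infinite-dimensional Fréchet space over 𝕂 (𝕂 = ℝ or ℂ) that admits no continuous norm. Then there exists a countable dense linearly independent subset A of X that is not an orbit: there are no continuous linear operator T on X and x ∈ X with A = {Tⁿx : n ≥ 0}. -/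
/-!
Take a monotone sequence of continuous seminorms `p n` generating the topology and an index `i₀`
with `p i₀ ≠ 0`. As there is no continuous norm, every `ker (p n)` is infinite-dimensional, so
one can choose, jointly linearly independent, vectors `w n ∈ ker (p (i₀ + n))` and, for each set
`U k` of a countable basis, a vector `d k ∈ U k` with `p i₀ (d k) ≠ 0`; the set `A` of all the
`w n` and `d k` is dense. If `A` were the orbit of `x` under `T`, then `p i₀ ∘ T`, a continuous
seminorm, would vanish on `w n` for all large `n`: from there on `T` sends the `w n` into
`A ∩ ker (p i₀) = {w n}`, so the orbit is eventually trapped among the `w n` and meets only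
finitely many `d k`.
-/

open Set Function Filter TopologicalSpace

namespace Seminorm

variable {𝕜 E : Type*} [NormedField 𝕜] [AddCommGroup E] [Module 𝕜 E]

def ker (p : Seminorm 𝕜 E) : Submodule 𝕜 E where
  carrier := {x | p x = 0}
  add_mem' {x y} hx hy :=
    le_antisymm ((map_add_le_add p x y).trans_eq (by simp_all)) (apply_nonneg p _)
  zero_mem' := map_zero p
  smul_mem' c x hx := by simp_all [map_smul_eq_mul]

@[simp]
theorem mem_ker {p : Seminorm 𝕜 E} {x : E} : x ∈ p.ker ↔ p x = 0 := Iff.rfl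

theorem ker_le_ker {p q : Seminorm 𝕜 E} (h : p ≤ q) : q.ker ≤ p.ker := fun x hx =>
  le_antisymm ((h x).trans_eq hx) (apply_nonneg p x)

theorem isClosed_ker [TopologicalSpace E] {p : Seminorm 𝕜 E} (hp : Continuous p) :
    IsClosed (p.ker : Set E) :=
  isClosed_eq hp continuous_const

end Seminorm

theorem WithSeminorms.exists_ker_le_of_monotone {𝕜 E : Type*} [NontriviallyNormedField 𝕜]
    [AddCommGroup E] [Module 𝕜 E] [TopologicalSpace E] {p : ℕ → Seminorm 𝕜 E}
    (hp : WithSeminorms p) (hp_mono : Monotone p) {q : Seminorm 𝕜 E} (hq : Continuous q) :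
    ∃ n, (p n).ker ≤ q.ker := by
  obtain ⟨s, C, -, hle⟩ := Seminorm.bound_of_continuous hp q hq
  refine ⟨s.sup id, fun x hx => le_antisymm ?_ (apply_nonneg q x)⟩
  have hs : s.sup p ≤ p (s.sup id) :=
    Finset.sup_le fun i hi => hp_mono (Finset.le_sup (f := id) hi)
  calc q x ≤ C * s.sup p x := hle x
    _ ≤ C * p (s.sup id) x := by gcongr; exact hs x
    _ = 0 := by rw [Seminorm.mem_ker.mp hx, mul_zero]

section LocallyConvex

-- Under `ComplexOrder` the nonnegative elements of `𝕜` are the nonnegative reals, so convexity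
-- over `ℝ` and over `𝕜` agree.
open scoped ComplexOrder in
theorem LocallyConvexSpace.ofReal (𝕜 E : Type*) [RCLike 𝕜] [AddCommGroup E] [Module 𝕜 E]
    [Module ℝ E] [IsScalarTower ℝ 𝕜 E] [TopologicalSpace E] [IsTopologicalAddGroup E]
    [LocallyConvexSpace ℝ E] : LocallyConvexSpace 𝕜 E :=
  .ofBasisZero 𝕜 E _ _ (LocallyConvexSpace.convex_basis_zero ℝ E) fun _ hs =>
    convex_of_nonneg_surjective_algebraMap _ (fun _ => RCLike.nonneg_iff_exists_ofReal.mp) hs.2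

variable {𝕜 E : Type*} [RCLike 𝕜] [AddCommGroup E] [Module 𝕜 E] [TopologicalSpace E]
  [IsTopologicalAddGroup E] [ContinuousSMul 𝕜 E]

open scoped ComplexOrder in
/-- The gauges of an antitone basis of absolutely convex open neighbourhoods of `0`. -/
theorem exists_monotone_withSeminorms_s2 [Module ℝ E] [IsScalarTower ℝ 𝕜 E] [ContinuousSMul ℝ E]
    [LocallyConvexSpace ℝ E] [FirstCountableTopology E] :
    ∃ p : ℕ → Seminorm 𝕜 E, Monotone p ∧ WithSeminorms p := by
  have := LocallyConvexSpace.ofReal 𝕜 E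
  obtain ⟨u, hu, hu'⟩ := exists_nhds_hasAntitoneBasis_absConvex_open_add_closure_subset 𝕜 E
  have hu_absorbent n : Absorbent ℝ (u n) := absorbent_nhds_zero (hu.mem n)
  let p n : Seminorm 𝕜 E :=
    gaugeSeminorm (hu' n).2.1.1 ((hu' n).2.1.2.lift ℝ) (hu_absorbent n)
  have hp_ball n : (p n).ball 0 1 = u n := gaugeSeminorm_ball_one (hu' n).1
  have hp_cont n : Continuous (p n) :=
    Seminorm.continuous (r := 1) (by rw [hp_ball]; exact hu.mem n)
  refine ⟨p, fun m n hmn x => gauge_mono (hu_absorbent n) (hu.antitone hmn) x,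
    SeminormFamily.withSeminorms_of_hasBasis p (hu.1.to_hasBasis (fun n _ =>
      ⟨_, SeminormFamily.basisSets_singleton_mem p n one_pos, (hp_ball n).le⟩) fun s hs => ?_)⟩
  obtain ⟨t, r, hr, rfl⟩ := (SeminormFamily.basisSets_iff p).mp hs
  exact hu.1.mem_iff.mp
    (Seminorm.ball_mem_nhds (Seminorm.continuous_finsetSup fun i _ => hp_cont i) hr)

/-- Adding to `q` the coordinates of a continuous projection onto its kernel gives a norm. -/
theorem Seminorm.exists_continuous_norm_of_finiteDimensional_ker [T2Space E]
    [PolynormableSpace 𝕜 E] {q : Seminorm 𝕜 E} (hq : Continuous q) [FiniteDimensional 𝕜 q.ker] :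
    ∃ N : Seminorm 𝕜 E, Continuous N ∧ ∀ x, N x = 0 → x = 0 := by
  obtain ⟨π, hπ⟩ := Submodule.ClosedComplemented.of_finiteDimensional q.ker
  let b := Module.finBasis 𝕜 q.ker
  let coords : E →ₗ[𝕜] Fin _ → 𝕜 := b.equivFun.toLinearMap ∘ₗ π.toLinearMap
  have hcoords : Continuous coords :=
    (LinearMap.continuous_of_finiteDimensional b.equivFun.toLinearMap).comp π.continuous
  refine ⟨q + (normSeminorm 𝕜 _).comp coords, hq.add (continuous_norm.comp hcoords),
    fun x hx => ?_⟩
  obtain ⟨hqx, hcx⟩ := (add_eq_zero_iff_of_nonneg (apply_nonneg _ _) (apply_nonneg _ _)).mp hx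
  have hπx : π x = 0 := by simpa [coords] using hcx
  simpa [hπx] using congrArg Subtype.val (hπ ⟨x, hqx⟩).symm

end LocallyConvex

section LinearIndependent

variable {K V : Type*} [DivisionRing K] [AddCommGroup V] [Module K V]

theorem linearIndependent_of_notMem_span_image_Iio {v : ℕ → V}
    (hv : ∀ n, v n ∉ Submodule.span K (v '' Iio n)) : LinearIndependent K v := by
  rw [← linearIndepOn_univ_iff, ← iUnion_Iio]
  refine linearIndepOn_iUnion_of_directed (Monotone.directed_le fun _ _ => Iio_subset_Iio)
    fun n => ?_
  induction n with
  | zero => simp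
  | succ n ih =>
    rw [show Iio (n + 1) = insert n (Iio n) from Order.Iio_succ_eq_insert n]
    exact (linearIndepOn_insert (by simp)).2 ⟨ih, hv n⟩

theorem exists_linearIndependent_seq_mem (C : ℕ → Set V)
    (hC : ∀ n (S : Submodule K V), FiniteDimensional K S → ¬ C n ⊆ S) :
    ∃ e : ℕ → V, LinearIndependent K e ∧ ∀ n, e n ∈ C n := by
  choose pick hpick_mem hpick_notMem using fun n S hS => not_subset.mp (hC n S hS)
  -- `S n` is spanned by the first `n` chosen vectors; `e n` is picked outside it.
  let S : ℕ → {S : Submodule K V // FiniteDimensional K S} := fun n =>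
    Nat.rec ⟨⊥, inferInstance⟩ (fun n S =>
      ⟨S.1 ⊔ K ∙ pick n S.1 S.2, have := S.2; inferInstance⟩) n
  let e n := pick n (S n).1 (S n).2
  have hS_mono : Monotone fun n => (S n).1 := monotone_nat_of_le_succ fun n => le_sup_left
  have he_mem m n (h : m < n) : e m ∈ (S n).1 :=
    hS_mono (Nat.succ_le_of_lt h) (Submodule.mem_sup_right (Submodule.mem_span_singleton_self _))
  refine ⟨e, linearIndependent_of_notMem_span_image_Iio fun n hn => ?_, fun n => hpick_mem n _ _⟩
  exact hpick_notMem n (S n).1 (S n).2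
    (Submodule.span_le.mpr (image_subset_iff.mpr fun m hm => he_mem m n hm) hn)

theorem exists_linearIndependent_forall_mem {ι : Type*} [Denumerable ι] (C : ι → Set V)
    (hC : ∀ i (S : Submodule K V), FiniteDimensional K S → ¬ C i ⊆ S) :
    ∃ e : ι → V, LinearIndependent K e ∧ ∀ i, e i ∈ C i := by
  obtain ⟨e, he, he_mem⟩ := exists_linearIndependent_seq_mem (C ∘ (Denumerable.eqv ι).symm)
    fun n => hC _
  exact ⟨e ∘ Denumerable.eqv ι, he.comp _ (Equiv.injective _), fun i => by
    simpa using he_mem (Denumerable.eqv ι i)⟩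

end LinearIndependent

theorem IsOpen.not_subset_submodule {𝕜 E : Type*} [NontriviallyNormedField 𝕜] [AddCommGroup E]
    [Module 𝕜 E] [TopologicalSpace E] [ContinuousAdd E] [ContinuousSMul 𝕜 E] {U : Set E}
    (hU : IsOpen U) (hne : U.Nonempty) {S : Submodule 𝕜 E} (hS : S ≠ ⊤) : ¬ U ⊆ S := fun h =>
  hS (S.eq_top_of_nonempty_interior' (hne.mono (hU.subset_interior_iff.mpr h)))

theorem exists_linearIndependent_sum_mem {𝕜 E : Type*} [NontriviallyNormedField 𝕜]
    [AddCommGroup E] [Module 𝕜 E] [TopologicalSpace E] [ContinuousAdd E] [ContinuousSMul 𝕜 E]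
    (hinf : ¬ FiniteDimensional 𝕜 E) {K : ℕ → Submodule 𝕜 E}
    (hK : ∀ n, ¬ FiniteDimensional 𝕜 (K n)) {S₀ : Submodule 𝕜 E} (hS₀ : IsClosed (S₀ : Set E))
    (hS₀_ne : S₀ ≠ ⊤) {U : ℕ → Set E} (hU : ∀ k, IsOpen (U k)) (hU_ne : ∀ k, (U k).Nonempty) :
    ∃ e : ℕ ⊕ ℕ → E, LinearIndependent 𝕜 e ∧ (∀ n, e (.inl n) ∈ K n) ∧
      ∀ k, e (.inr k) ∈ U k \ S₀ := by
  obtain ⟨e, he, he_mem⟩ := exists_linearIndependent_forall_mem (K := 𝕜)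
    (Sum.elim (fun n => (K n : Set E)) fun k => U k \ S₀) <| by
    rintro (n | k) S hS hsub
    · exact hK n (Submodule.finiteDimensional_of_le hsub)
    · refine ((hU k).sdiff hS₀).not_subset_submodule
        (sdiff_nonempty.mpr ((hU k).not_subset_submodule (hU_ne k) hS₀_ne)) (fun h => hinf ?_) hsub
      subst h
      exact Module.Finite.equiv Submodule.topEquiv
  exact ⟨e, he, fun n => he_mem (.inl n), fun k => he_mem (.inr k)⟩

theorem TopologicalSpace.exists_seq_nonempty_isTopologicalBasis (X : Type*) [TopologicalSpace X]
    [SecondCountableTopology X] [Nonempty X] :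
    ∃ U : ℕ → Set X, IsTopologicalBasis (range U) ∧ ∀ k, (U k).Nonempty := by
  obtain ⟨B, hB_count, hB_empty, hB⟩ := exists_countable_basis X
  obtain ⟨U, rfl⟩ := hB_count.exists_eq_range (Nonempty.of_sUnion_eq_univ hB.sUnion_eq)
  exact ⟨U, hB, fun k => nonempty_iff_ne_empty.mpr fun h => hB_empty (h ▸ mem_range_self k)⟩

namespace Function

variable {α : Type*} {f : α → α} {x : α}

theorem injective_iterate_of_infinite_range (h : (range fun n => f^[n] x).Infinite) :
    Injective fun n => f^[n] x := by
  intro i j hij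
  by_contra hne
  wlog hlt : i < j generalizing i j
  · exact this hij.symm (Ne.symm hne) (by omega)
  have hper : IsPeriodicPt f (j - i) (f^[i] x) := by
    rw [IsPeriodicPt, IsFixedPt, ← iterate_add_apply, Nat.sub_add_cancel hlt.le]
    exact hij.symm
  refine h (((finite_Iio j).image fun n => f^[n] x).subset ?_)
  rintro _ ⟨n, rfl⟩
  rcases lt_or_ge n i with hn | hn
  · exact ⟨n, hn.trans hlt, rfl⟩
  · refine ⟨(n - i) % (j - i) + i, ?_, ?_⟩
    · have := Nat.mod_lt (n - i) (Nat.sub_pos_of_lt hlt)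
      simp only [mem_Iio]; omega
    · show f^[(n - i) % (j - i) + i] x = f^[n] x
      rw [iterate_add_apply, hper.iterate_mod_apply, ← iterate_add_apply, Nat.sub_add_cancel hn]

theorem finite_range_iterate_diff {W F : Set α} (hF : F.Finite)
    (hf : ∀ n, f^[n] x ∈ W → f^[n] x ∉ F → f^[n + 1] x ∈ W)
    (hW : (range (fun n => f^[n] x) ∩ W).Infinite) : (range (fun n => f^[n] x) \ W).Finite := by
  set o := fun n => f^[n] x
  have ho := injective_iterate_of_infinite_range (hW.mono inter_subset_left)
  obtain ⟨N, hN⟩ := (hF.preimage ho.injOn).bddAbove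
  rw [← image_preimage_eq_range_inter] at hW
  obtain ⟨n₀, hn₀W, hn₀N⟩ := hW.of_image o |>.exists_gt N
  have hW_after n (hn : n₀ ≤ n) : o n ∈ W := by
    induction n, hn using Nat.le_induction with
    | base => exact hn₀W
    | succ n hn ih =>
      exact hf n ih fun hF' => by have := hN hF'; omega
  refine ((finite_Iio n₀).image o).subset ?_
  rintro _ ⟨⟨n, rfl⟩, hn⟩
  exact ⟨n, not_le.mp fun h => hn (hW_after n h), rfl⟩

end Function

theorem not_exists_range_eq_orbit {𝕜 E : Type*} [NontriviallyNormedField 𝕜] [AddCommGroup E]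
    [Module 𝕜 E] [TopologicalSpace E] {e : ℕ ⊕ ℕ → E} (he : Injective e) {p₀ : Seminorm 𝕜 E}
    (hp₀ : Continuous p₀) (he_inl : ∀ n, e (.inl n) ∈ p₀.ker) (he_inr : ∀ k, e (.inr k) ∉ p₀.ker)
    (he_null : ∀ q : Seminorm 𝕜 E, Continuous q → ∀ᶠ n in atTop, e (.inl n) ∈ q.ker) :
    ¬ ∃ (T : E →L[𝕜] E) (x : E), range e = range fun n : ℕ => (T ^ n) x := by
  rintro ⟨T, x, hTx⟩
  simp only [FunLike.coe_pow_eq_iterate] at hTx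
  obtain ⟨N, hN⟩ := eventually_atTop.mp (he_null (p₀.comp T.toLinearMap) (hp₀.comp T.continuous))
  have hstep n (hn : T^[n] x ∈ p₀.ker) (hnN : T^[n] x ∉ e '' (.inl '' Iio N)) :
      T^[n + 1] x ∈ p₀.ker := by
    obtain ⟨m | k, hm⟩ : T^[n] x ∈ range e := hTx ▸ mem_range_self n
    · rw [iterate_succ_apply', ← hm]
      exact hN m (not_lt.mp fun h => hnN ⟨_, mem_image_of_mem _ h, hm⟩)
    · exact absurd (hm ▸ hn) (he_inr k)
  refine (infinite_range_of_injective (he.comp Sum.inr_injective)).not_finite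
    ((finite_range_iterate_diff (((finite_Iio N).image _).image e) hstep ?_).subset ?_)
  · refine (infinite_range_of_injective (he.comp Sum.inl_injective)).mono ?_
    rintro _ ⟨n, rfl⟩
    exact ⟨hTx ▸ mem_range_self _, he_inl n⟩
  · rintro _ ⟨k, rfl⟩
    exact ⟨hTx ▸ mem_range_self _, he_inr k⟩

theorem exists_nonorbit_of_no_continuous_norm_general
    (𝕜 : Type*) [RCLike 𝕜] (X : Type*) [AddCommGroup X] [Module 𝕜 X]
    [Module ℝ X] [IsScalarTower ℝ 𝕜 X]
    -- X is a Fréchet space: a complete metrizable locally convex TVS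
    [UniformSpace X] [IsUniformAddGroup X] [ContinuousSMul 𝕜 X]
    [LocallyConvexSpace ℝ X] [TopologicalSpace.MetrizableSpace X]
    -- separable and infinite dimensional
    [TopologicalSpace.SeparableSpace X] (hinf : ¬ FiniteDimensional 𝕜 X)
    -- X possesses no continuous norm
    (hnonorm : ¬ ∃ N : Seminorm 𝕜 X, Continuous N ∧ ∀ x : X, N x = 0 → x = 0) :
    ∃ A : Set X, A.Countable ∧ A.Infinite ∧ Dense A ∧
      LinearIndependent 𝕜 ((↑) : A → X) ∧
      ¬ ∃ (T : X →L[𝕜] X) (x : X), A = Set.range (fun n : ℕ => (T ^ n) x) := by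
  have : ContinuousSMul ℝ X := IsScalarTower.continuousSMul 𝕜
  have : Nontrivial X := not_subsingleton_iff_nontrivial.mp fun _ => hinf Module.Finite.of_finite
  have : (uniformity X).IsCountablyGenerated := by
    rw [uniformity_eq_comap_nhds_zero X]; infer_instance
  have := UniformSpace.secondCountable_of_separable X
  obtain ⟨p, hp_mono, hp⟩ := exists_monotone_withSeminorms_s2 (𝕜 := 𝕜) (E := X)
  have := hp.toPolynormableSpace
  obtain ⟨x₀, hx₀⟩ := exists_ne (0 : X)
  obtain ⟨i₀, hi₀⟩ := hp.separating_of_T1 x₀ hx₀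
  obtain ⟨U, hU, hU_ne⟩ := exists_seq_nonempty_isTopologicalBasis X
  obtain ⟨e, he, he_inl, he_inr⟩ := exists_linearIndependent_sum_mem hinf
    (K := fun n => (p (i₀ + n)).ker) (fun n _ => hnonorm
      (Seminorm.exists_continuous_norm_of_finiteDimensional_ker (hp.continuous_seminorm (i₀ + n))))
    (Seminorm.isClosed_ker (hp.continuous_seminorm i₀))
    (fun h => hi₀ (Seminorm.mem_ker.mp (h ▸ Submodule.mem_top)))
    (fun k => hU.isOpen (mem_range_self k)) hU_ne
  refine ⟨range e, countable_range e, infinite_range_of_injective he.injective, ?_,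
    he.linearIndepOn_id, not_exists_range_eq_orbit he.injective (hp.continuous_seminorm i₀)
      (fun n => Seminorm.ker_le_ker (hp_mono le_self_add) (he_inl n)) (fun k => (he_inr k).2)
      fun q hq => ?_⟩
  · refine hU.dense_iff.mpr ?_
    rintro _ ⟨k, rfl⟩ -
    exact ⟨e (.inr k), (he_inr k).1, mem_range_self _⟩
  · obtain ⟨n, hn⟩ := hp.exists_ker_le_of_monotone hp_mono hq
    exact eventually_atTop.mpr ⟨n, fun m hm =>
      hn (Seminorm.ker_le_ker (hp_mono (hm.trans le_add_self)) (he_inl m))⟩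

/-- In a separable infinite-dimensional Fréchet space admitting no continuous
norm, there is a countable dense linearly independent subset which is not an orbit of any
continuous linear operator. -/
theorem exists_nonorbit_of_no_continuous_norm
    (𝕜 : Type*) [RCLike 𝕜] (X : Type*) [AddCommGroup X] [Module 𝕜 X]
    [Module ℝ X] [IsScalarTower ℝ 𝕜 X]
    -- X is a Fréchet space: a complete metrizable locally convex TVS
    [UniformSpace X] [IsUniformAddGroup X] [ContinuousSMul 𝕜 X]
    [LocallyConvexSpace ℝ X] [CompleteSpace X] [TopologicalSpace.MetrizableSpace X]
    -- separable and infinite dimensional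
    [TopologicalSpace.SeparableSpace X] (hinf : ¬ FiniteDimensional 𝕜 X)
    -- X possesses no continuous norm
    (hnonorm : ¬ ∃ N : Seminorm 𝕜 X, Continuous N ∧ ∀ x : X, N x = 0 → x = 0) :
    ∃ A : Set X, A.Countable ∧ A.Infinite ∧ Dense A ∧
      LinearIndependent 𝕜 ((↑) : A → X) ∧
      ¬ ∃ (T : X →L[𝕜] X) (x : X), A = Set.range (fun n : ℕ => (T ^ n) x) :=
  exists_nonorbit_of_no_continuous_norm_general 𝕜 X hinf hnonorm
end

section
/- Let X be a locally convex topological vector space over 𝕂 (𝕂 = ℝ or ℂ) that is a G-space and supports a hypercyclic continuous linear operator T₀. Then every countable dense linearly independent subset A of X is an orbit: there exist a continuous linear operator T on X and x ∈ X with A = {Tⁿx : n ≥ 0}. -/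
/-!
If the topology of `X` is indiscrete, every linear map is continuous, and the shift along an
enumeration of `A` is the required operator. Otherwise the orbit of a hypercyclic vector `x₀` is
itself in `Σ(X)`: were some `T₀ᵏ x₀` in the span of the earlier iterates, the orbit would lie in a
finite-dimensional subspace, so the Hausdorff quotient of `X` would be a nontrivial
finite-dimensional space with a dense orbit. But there `y ↦ det (T₀ⁱ y)ᵢ` is multiplied by
`det T₀` along orbits and vanishes at `0`, which is incompatible with density. Transitivity of
`GL(X)` carries this orbit onto `A`, and conjugating `T₀` by that automorphism gives `T`.
-/

noncomputable section

/-- `A` belongs to `Σ(X)`: `A` is a countable (infinite) dense linearly independent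
subset of `X`. -/
def MemSigma (𝕜 : Type*) [RCLike 𝕜] {X : Type*} [AddCommGroup X] [Module 𝕜 X]
    [TopologicalSpace X] (A : Set X) : Prop :=
  A.Countable ∧ A.Infinite ∧ Dense A ∧ LinearIndependent 𝕜 ((↑) : A → X)

open Set Submodule Filter Topology

section LinearAlgebra

variable {K V V' : Type*} [DivisionRing K] [AddCommGroup V] [Module K V]
  [AddCommGroup V'] [Module K V']

theorem linearIndepOn_Iio_of_notMem_span {v : ℕ → V} {n : ℕ}
    (h : ∀ k < n, v k ∉ span K (v '' Iio k)) : LinearIndepOn K v (Iio n) := by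
  induction n with
  | zero => simp
  | succ n ih =>
    rw [← Order.succ_eq_add_one, Order.Iio_succ_eq_insert]
    exact (linearIndepOn_insert self_notMem_Iio).2
      ⟨ih fun k hk => h k (hk.trans n.lt_succ_self), h n n.lt_succ_self⟩

theorem linearIndependent_of_notMem_span_Iio {v : ℕ → V}
    (h : ∀ k, v k ∉ span K (v '' Iio k)) : LinearIndependent K v := by
  rw [← linearIndepOn_univ_iff, ← iUnion_Iio]
  exact linearIndepOn_iUnion_of_directed monotone_Iio.directed_le
    fun _ => linearIndepOn_Iio_of_notMem_span fun k _ => h k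

theorem LinearIndependent.exists_linearMap_apply_eq {ι : Type*} {v : ι → V}
    (hv : LinearIndependent K v) (g : ι → V') :
    ∃ f : V →ₗ[K] V', ∀ i, f (v i) = g i := by
  obtain ⟨f, hf⟩ := LinearMap.exists_extend (Finsupp.linearCombination K g ∘ₗ hv.repr)
  refine ⟨f, fun i => ?_⟩
  simpa [hv.repr_eq_single i] using congr($hf ⟨v i, subset_span (mem_range_self i)⟩)

end LinearAlgebra

section Orbit

variable {R M : Type*} [Semiring R] [AddCommMonoid M] [Module R M]

theorem Module.End.pow_apply_mem_span_Iio_of_mem (f : Module.End R M) (x : M) {k : ℕ}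
    (hk : (f ^ k) x ∈ span R ((fun n => (f ^ n) x) '' Iio k)) (m : ℕ) :
    (f ^ m) x ∈ span R ((fun n => (f ^ n) x) '' Iio k) := by
  set W := span R ((fun n => (f ^ n) x) '' Iio k)
  have hle : ∀ n ≤ k, (f ^ n) x ∈ W := fun n hn =>
    hn.lt_or_eq.elim (fun h => subset_span ⟨n, h, rfl⟩) fun h => h ▸ hk
  have hinv : W ≤ W.comap f := by
    refine span_le.2 ?_
    rintro _ ⟨n, hn, rfl⟩
    simpa [← Module.End.mul_apply, ← pow_succ'] using hle (n + 1) hn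
  induction m with
  | zero => simpa using hle 0 k.zero_le
  | succ m ih => simpa [pow_succ'] using hinv ih

theorem Module.End.pow_apply_of_apply_eq_succ (f : Module.End R M) {v : ℕ → M}
    (hv : ∀ n, f (v n) = v (n + 1)) (n : ℕ) : (f ^ n) (v 0) = v n := by
  induction n with
  | zero => rfl
  | succ n ih => rw [pow_succ', Module.End.mul_apply, ih, hv]

end Orbit

theorem exists_eq_range_pow_apply {K V : Type*} [DivisionRing K] [AddCommGroup V]
    [Module K V] {A : Set V} (hc : A.Countable) (hi : A.Infinite)
    (hA : LinearIndependent K ((↑) : A → V)) :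
    ∃ (f : Module.End K V) (x : V), A = range fun n => (f ^ n) x := by
  have := hc.to_subtype
  have := hi.to_subtype
  obtain ⟨e⟩ : Nonempty (ℕ ≃ A) := nonempty_equiv_of_countable
  let v : ℕ → V := fun n => e n
  obtain ⟨f, hf⟩ := (hA.comp e e.injective).exists_linearMap_apply_eq fun n => v (n + 1)
  refine ⟨f, v 0, ?_⟩
  rw [funext (Module.End.pow_apply_of_apply_eq_succ f (v := v) hf)]
  exact ((e.surjective.range_comp Subtype.val).trans Subtype.range_coe).symm

-- If `‖δ‖ < 1`, a tail of `δ ^ n` stays away from `F (v 0) = 1`; otherwise all of it stays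
-- away from `F z = 0`.
theorem not_dense_range_of_map_eq_pow {𝕜 E : Type*} [NormedField 𝕜] [TopologicalSpace E]
    [T1Space E] [∀ x : E, NeBot (𝓝[≠] x)] {v : ℕ → E} {F : E → 𝕜} (hF : Continuous F)
    {δ : 𝕜} (hFv : ∀ n, F (v n) = δ ^ n) {z : E} (hFz : F z = 0) : ¬ Dense (range v) := by
  intro hv
  rcases lt_or_ge ‖δ‖ 1 with hδ | hδ
  · obtain ⟨N, hN⟩ := exists_pow_lt_of_lt_one (by norm_num : (0 : ℝ) < 1 / 2) hδ
    have htail : Dense (range v \ v '' Iio N) := hv.sdiff_finite ((finite_Iio N).image v)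
    obtain ⟨_, ⟨⟨n, rfl⟩, hnN⟩, hn⟩ := htail.exists_mem_open (Metric.isOpen_ball.preimage hF)
      ⟨v 0, Metric.mem_ball_self (by norm_num : (0 : ℝ) < 1 / 2)⟩
    have hNn : N ≤ n := not_lt.1 fun h => hnN ⟨n, h, rfl⟩
    have hsmall : ‖δ ^ n‖ < 1 / 2 := by
      rw [norm_pow]
      exact (pow_le_pow_of_le_one (norm_nonneg δ) hδ.le hNn).trans_lt hN
    have hclose : ‖δ ^ n - 1‖ < 1 / 2 := by simpa [hFv, dist_eq_norm] using hn
    have := norm_sub_norm_le (1 : 𝕜) (δ ^ n)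
    rw [norm_one, norm_sub_rev] at this
    linarith
  · obtain ⟨_, ⟨n, rfl⟩, hn⟩ := hv.exists_mem_open
      (Metric.isOpen_ball.preimage hF) ⟨z, Metric.mem_ball_self one_pos⟩
    have : ‖δ‖ ^ n < 1 := by simpa [hFv, hFz] using hn
    exact this.not_ge (one_le_pow₀ hδ)

section TopologicalVectorSpace

variable {𝕜 E : Type*} [NontriviallyNormedField 𝕜] [CompleteSpace 𝕜]
  [AddCommGroup E] [Module 𝕜 E] [TopologicalSpace E] [IsTopologicalAddGroup E]
  [ContinuousSMul 𝕜 E]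

theorem Submodule.eq_top_of_dense_of_finiteDimensional [T2Space E] (W : Submodule 𝕜 E)
    [FiniteDimensional 𝕜 W] (hW : Dense (W : Set E)) : W = ⊤ :=
  coe_eq_univ.1 <| W.closed_of_finiteDimensional.closure_eq.symm.trans hW.closure_eq

/-- With `b` a basis made of points `fⁱ x` of the orbit, `F y = b.det (fⁱ y)ᵢ` satisfies
`F (f y) = det f * F y`, `F x = 1` and `F 0 = 0`. -/
theorem Module.End.not_dense_range_pow_apply [T2Space E] [FiniteDimensional 𝕜 E] [Nontrivial E]
    (f : Module.End 𝕜 E) (x : E) : ¬ Dense (range fun n => (f ^ n) x) := by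
  intro hx
  set v : ℕ → E := fun n => (f ^ n) x
  obtain ⟨κ, a, -, hspan, hli⟩ := exists_linearIndependent' 𝕜 v
  have htop : span 𝕜 (range (v ∘ a)) = ⊤ :=
    eq_top_of_dense_of_finiteDimensional _ (hspan ▸ hx.mono subset_span)
  let b := Basis.mk hli htop.ge
  have hb : ⇑b = v ∘ a := Basis.coe_mk _ _
  have : Fintype κ := FiniteDimensional.fintypeBasisIndex b
  have : Nonempty κ := b.index_nonempty
  classical
  let F : E → 𝕜 := fun y => b.det fun i => (f ^ a i) y
  have hF : Continuous F := by
    simp only [F, Basis.det_apply]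
    refine Continuous.matrix_det (continuous_matrix fun i j => ?_)
    exact (b.coord i ∘ₗ f ^ a j).continuous_of_finiteDimensional
  have hFf : ∀ y, F (f y) = LinearMap.det f * F y := fun y => by
    simp only [F, ← b.det_comp]
    congr 1
    ext i
    simp only [Function.comp_apply, ← Module.End.mul_apply, pow_mul_comm']
  have hFv : ∀ n, F (v n) = LinearMap.det f ^ n := by
    intro n
    induction n with
    | zero => rw [pow_zero, ← b.det_self, hb]; rfl
    | succ n ih => rw [pow_succ', ← ih, ← hFf]; simp [v, pow_succ', Module.End.mul_apply]
  have : ∀ y : E, NeBot (𝓝[≠] y) := Module.punctured_nhds_neBot 𝕜 E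
  exact not_dense_range_of_map_eq_pow hF hFv (z := 0)
    (by simp only [F, map_zero]; exact b.det.map_zero) hx

theorem Module.End.linearIndependent_pow_apply_of_dense [T2Space E] [Nontrivial E]
    (f : Module.End 𝕜 E) {x : E} (hx : Dense (range fun n => (f ^ n) x)) :
    LinearIndependent 𝕜 fun n => (f ^ n) x := by
  refine linearIndependent_of_notMem_span_Iio fun k hk => ?_
  set W := span 𝕜 ((fun n => (f ^ n) x) '' Iio k)
  have : FiniteDimensional 𝕜 W := FiniteDimensional.span_of_finite 𝕜 ((finite_Iio k).image _)
  have hW : W = ⊤ := W.eq_top_of_dense_of_finiteDimensional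
    (hx.mono (range_subset_iff.2 (Module.End.pow_apply_mem_span_Iio_of_mem f x hk)))
  have : FiniteDimensional 𝕜 E := (LinearEquiv.ofTop W hW).finiteDimensional
  exact Module.End.not_dense_range_pow_apply f x hx

/-- The orbit descends to the Hausdorff space `SeparationQuotient E`, which is nontrivial. -/
theorem ContinuousLinearMap.linearIndependent_pow_apply_of_dense [NontrivialTopology E]
    (f : E →L[𝕜] E) {x : E} (hx : Dense (range fun n => (f ^ n) x)) :
    LinearIndependent 𝕜 fun n => (f ^ n) x := by
  let π := SeparationQuotient.mkCLM 𝕜 E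
  let g : SeparationQuotient E →L[𝕜] SeparationQuotient E :=
    SeparationQuotient.liftCLM (π ∘L f) fun _ _ h =>
      SeparationQuotient.mk_eq_mk.2 (h.map f.continuous)
  have horbit : ∀ n, π ((f ^ n) x) = ((g : Module.End 𝕜 _) ^ n) (π x) := fun n => by
    induction n with
    | zero => rfl
    | succ n ih => rw [pow_succ', pow_succ', Module.End.mul_apply, ← ih]; rfl
  have hg : Dense (range fun n => ((g : Module.End 𝕜 _) ^ n) (π x)) := by
    simp_rw [← horbit]
    rw [range_comp']
    exact SeparationQuotient.surjective_mk.denseRange.dense_image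
      SeparationQuotient.continuous_mk hx
  have hli := Module.End.linearIndependent_pow_apply_of_dense _ hg
  rw [← funext horbit] at hli
  exact LinearIndependent.of_comp (π : E →ₗ[𝕜] SeparationQuotient E) hli

end TopologicalVectorSpace

theorem memSigma_range {𝕜 X : Type*} [RCLike 𝕜] [AddCommGroup X] [Module 𝕜 X]
    [TopologicalSpace X] {v : ℕ → X} (hv : LinearIndependent 𝕜 v) (hd : Dense (range v)) :
    MemSigma 𝕜 (range v) :=
  ⟨countable_range v, infinite_range_of_injective hv.injective, hd, hv.linearIndepOn_id⟩

theorem orbit_of_gspace_with_hypercyclic_general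
    (𝕜 : Type*) [RCLike 𝕜] (X : Type*) [AddCommGroup X] [Module 𝕜 X]
    -- X is a locally convex TVS
    [TopologicalSpace X] [IsTopologicalAddGroup X] [ContinuousSMul 𝕜 X]
    -- X is a G-space : Σ(X) ≠ ∅ and GL(X) acts transitively on Σ(X)
    (htrans : ∀ A B : Set X, MemSigma 𝕜 A → MemSigma 𝕜 B →
      ∃ J : X ≃L[𝕜] X, J '' A = B)
    -- X supports a hypercyclic operator T₀
    (hhyp : ∃ (T₀ : X →L[𝕜] X) (x₀ : X), Dense (Set.range (fun n : ℕ => (T₀ ^ n) x₀))) :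
    ∀ A : Set X, MemSigma 𝕜 A →
      ∃ (T : X →L[𝕜] X) (x : X), A = Set.range (fun n : ℕ => (T ^ n) x) := by
  intro A hA
  rcases TopologicalSpace.indiscrete_or_nontrivial X with hX | hX
  · obtain ⟨hc, hi, -, hli⟩ := hA
    obtain ⟨f, x, rfl⟩ := exists_eq_range_pow_apply hc hi hli
    refine ⟨⟨f, continuous_of_indiscreteTopology⟩, x, ?_⟩
    simp [Module.End.coe_pow]
  · obtain ⟨T₀, x₀, hT₀⟩ := hhyp
    have hO := memSigma_range (T₀.linearIndependent_pow_apply_of_dense hT₀) hT₀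
    obtain ⟨J, hJ⟩ := htrans _ A hO hA
    refine ⟨J.conjContinuousAlgEquiv T₀, J x₀, ?_⟩
    rw [← hJ, ← range_comp]
    congr 1
    ext n
    simp [← map_pow]

/-- If a locally convex space `X` is a G-space (`Σ(X)` is nonempty and
`GL(X)` acts transitively on it) and supports a hypercyclic operator, then every member
of `Σ(X)` is an orbit of a continuous linear operator. -/
theorem orbit_of_gspace_with_hypercyclic
    (𝕜 : Type*) [RCLike 𝕜] (X : Type*) [AddCommGroup X] [Module 𝕜 X]
    [Module ℝ X] [IsScalarTower ℝ 𝕜 X]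
    -- X is a locally convex TVS
    [TopologicalSpace X] [IsTopologicalAddGroup X] [ContinuousSMul 𝕜 X]
    [LocallyConvexSpace ℝ X]
    -- X is a G-space : Σ(X) ≠ ∅ and GL(X) acts transitively on Σ(X)
    (hne : ∃ A : Set X, MemSigma 𝕜 A)
    (htrans : ∀ A B : Set X, MemSigma 𝕜 A → MemSigma 𝕜 B →
      ∃ J : X ≃L[𝕜] X, J '' A = B)
    -- X supports a hypercyclic operator T₀
    (hhyp : ∃ (T₀ : X →L[𝕜] X) (x₀ : X), Dense (Set.range (fun n : ℕ => (T₀ ^ n) x₀))) :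
    ∀ A : Set X, MemSigma 𝕜 A →
      ∃ (T : X →L[𝕜] X) (x : X), A = Set.range (fun n : ℕ => (T ^ n) x) :=
  orbit_of_gspace_with_hypercyclic_general 𝕜 X htrans hhyp
end
end

section
/- Let ω = 𝕂^ℕ with the product topology (𝕂 = ℝ or ℂ). Then GL(ω) acts transitively on the set of dense countably infinite-dimensional linear subspaces of ω: for any two dense linear subspaces E and F of ω of countably infinite dimension, there exists a continuous linear automorphism T of ω (with continuous inverse) such that T(E) = F. -/
/-!
Call `e : ℕ → ω` echelon if `e n` vanishes at the coordinates `k < n` and not at `n`. The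
coefficient map `a ↦ ∑ₙ aₙ • eₙ` of an echelon sequence is a lower triangular infinite matrix,
hence a continuous linear automorphism of `ω` (inverted by forward substitution); it sends the
unit vectors to the `eₙ` and so the finitely supported sequences onto `span {eₙ}`. It therefore
suffices to show that a dense subspace `E` spanned by a sequence `(bₘ)` is spanned by an echelon
sequence lying in `E`. Density makes every restriction `E → 𝕜ⁿ⁺¹` onto, so `E` contains some
echelon sequence `(wₙ)`. Gaussian elimination of `b₀, b₁, …`, choosing at coordinate `n` the first
residual that is nonzero there and falling back to `wₙ` when there is none, yields an echelon
sequence in `E` whose span absorbs every `bₘ`.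
-/

open Set Submodule Filter

section

variable {𝕜 : Type*}

structure IsEchelon [Zero 𝕜] (e : ℕ → ℕ → 𝕜) : Prop where
  apply_of_lt : ∀ {n k : ℕ}, k < n → e n k = 0
  apply_self_ne_zero : ∀ n, e n n ≠ 0

namespace Elimination

variable [Field 𝕜]

open Classical in
noncomputable def pivot (R : ℕ → ℕ → 𝕜) (w : ℕ → 𝕜) (n : ℕ) : ℕ → 𝕜 :=
  if h : ∃ m, R m n ≠ 0 then R (Nat.find h) else w

lemma pivot_apply_of_lt {R : ℕ → ℕ → 𝕜} {w : ℕ → 𝕜} {n k : ℕ}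
    (hR : ∀ m, R m k = 0) (hw : w k = 0) : pivot R w n k = 0 := by
  unfold pivot
  split_ifs <;> simp [hR, hw]

open Classical in
lemma pivot_apply_self_ne_zero {R : ℕ → ℕ → 𝕜} {w : ℕ → 𝕜} {n : ℕ} (hw : w n ≠ 0) :
    pivot R w n n ≠ 0 := by
  unfold pivot
  split_ifs with h
  exacts [Nat.find_spec h, hw]

lemma pivot_mem {E : Submodule 𝕜 (ℕ → 𝕜)} {R : ℕ → ℕ → 𝕜} {w : ℕ → 𝕜} (hR : ∀ m, R m ∈ E)
    (hw : w ∈ E) (n : ℕ) : pivot R w n ∈ E := by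
  unfold pivot
  split_ifs
  exacts [hR _, hw]

/-- `residual b w n m` is `b m` after eliminating coordinates `0, …, n - 1` against the
pivots `echelonize b w 0, …, echelonize b w (n - 1)`. -/
noncomputable def residual (b w : ℕ → ℕ → 𝕜) : ℕ → ℕ → ℕ → 𝕜
  | 0 => b
  | n + 1 =>
    let R := residual b w n
    fun m => R m - (R m n / pivot R (w n) n n) • pivot R (w n) n

noncomputable def echelonize (b w : ℕ → ℕ → 𝕜) (n : ℕ) : ℕ → 𝕜 :=
  pivot (residual b w n) (w n) n

variable {b w : ℕ → ℕ → 𝕜}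

lemma residual_succ (n m : ℕ) : residual b w (n + 1) m =
    residual b w n m - (residual b w n m n / echelonize b w n n) • echelonize b w n :=
  rfl

lemma residual_apply_of_lt (hw : IsEchelon w) {n k : ℕ} (hk : k < n) (m : ℕ) :
    residual b w n m k = 0 := by
  induction n generalizing m with
  | zero => omega
  | succ n ih =>
    have hpiv : echelonize b w n n ≠ 0 := pivot_apply_self_ne_zero (hw.apply_self_ne_zero n)
    rw [residual_succ]
    rcases (Nat.lt_succ_iff_lt_or_eq.1 hk) with hk | rfl
    · simp [ih hk, echelonize, pivot_apply_of_lt (fun m => ih hk m) (hw.apply_of_lt hk)]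
    · simp [div_mul_cancel₀ _ hpiv]

lemma isEchelon_echelonize (hw : IsEchelon w) : IsEchelon (echelonize b w) where
  apply_of_lt hk := pivot_apply_of_lt (residual_apply_of_lt hw hk) (hw.apply_of_lt hk)
  apply_self_ne_zero n := pivot_apply_self_ne_zero (hw.apply_self_ne_zero n)

lemma residual_mem {E : Submodule 𝕜 (ℕ → 𝕜)} (hb : ∀ m, b m ∈ E) (hw : ∀ n, w n ∈ E) (n m : ℕ) :
    residual b w n m ∈ E := by
  induction n generalizing m with
  | zero => exact hb m
  | succ n ih =>
    exact sub_mem (ih m) (smul_mem _ _ (pivot_mem ih (hw n) n))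

lemma echelonize_mem {E : Submodule 𝕜 (ℕ → 𝕜)} (hb : ∀ m, b m ∈ E) (hw : ∀ n, w n ∈ E)
    (n : ℕ) : echelonize b w n ∈ E :=
  pivot_mem (residual_mem hb hw n) (hw n) n

lemma sub_residual_mem_span (n m : ℕ) :
    b m - residual b w n m ∈ span 𝕜 (echelonize b w '' Iio n) := by
  induction n with
  | zero => simp [residual]
  | succ n ih =>
    rw [residual_succ, sub_sub_eq_add_sub, add_sub_right_comm]
    exact add_mem (span_mono (image_mono (Iio_subset_Iio n.le_succ)) ih)
      (smul_mem _ _ (subset_span ⟨n, n.lt_succ_self, rfl⟩))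

lemma residual_succ_of_apply_eq_zero {n m : ℕ} (h : residual b w n m n = 0) :
    residual b w (n + 1) m = residual b w n m := by
  simp [residual_succ, h]

lemma residual_eq_zero_of_le {n n' m : ℕ} (h : residual b w n m = 0) (hn : n ≤ n') :
    residual b w n' m = 0 := by
  induction n', hn using Nat.le_induction with
  | base => exact h
  | succ n' _ ih => rw [residual_succ_of_apply_eq_zero (by simp [ih]), ih]

open Classical in
lemma echelonize_eq_residual {n m : ℕ} (hprev : ∀ m' < m, residual b w n m' = 0)
    (h : residual b w n m n ≠ 0) : echelonize b w n = residual b w n m := by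
  have hex : ∃ m, residual b w n m n ≠ 0 := ⟨m, h⟩
  have hfind : Nat.find hex = m :=
    (Nat.find_eq_iff hex).2 ⟨h, fun m' hm' => by simp [hprev m' hm']⟩
  simp only [echelonize, pivot, dif_pos hex, hfind]

lemma residual_succ_eq_zero {n m : ℕ} (hprev : ∀ m' < m, residual b w n m' = 0)
    (h : residual b w n m n ≠ 0) : residual b w (n + 1) m = 0 := by
  rw [residual_succ, echelonize_eq_residual hprev h, div_self h, one_smul, sub_self]

lemma eventually_residual_eq_zero (hw : IsEchelon w) (m : ℕ) :
    ∀ᶠ n in atTop, residual b w n m = 0 := by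
  induction m using Nat.strong_induction_on with
  | _ m ih =>
  obtain ⟨N, hN⟩ := eventually_atTop.1 ((eventually_all_finite (finite_Iio m)).2 ih)
  suffices ∃ n, residual b w n m = 0 by
    obtain ⟨n, hn⟩ := this
    exact eventually_atTop.2 ⟨n, fun n' h => residual_eq_zero_of_le hn h⟩
  by_cases hhit : ∃ n ≥ N, residual b w n m n ≠ 0
  · obtain ⟨n, hn, hne⟩ := hhit
    exact ⟨n + 1, residual_succ_eq_zero (hN n hn) hne⟩
  · push Not at hhit
    have hconst : ∀ n ≥ N, residual b w n m = residual b w N m := fun n hn => by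
      induction n, hn using Nat.le_induction with
      | base => rfl
      | succ n hn ih => rw [residual_succ_of_apply_eq_zero (hhit n hn), ih]
    refine ⟨N, funext fun k => ?_⟩
    rw [← hconst (max N (k + 1)) (le_max_left _ _)]
    exact residual_apply_of_lt hw (by omega) m

end Elimination

open Elimination in
theorem exists_isEchelon_span_eq [Field 𝕜] {b w : ℕ → ℕ → 𝕜} {E : Submodule 𝕜 (ℕ → 𝕜)}
    (hb : span 𝕜 (range b) = E) (hwE : ∀ n, w n ∈ E) (hw : IsEchelon w) :
    ∃ e, IsEchelon e ∧ span 𝕜 (range e) = E := by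
  have hbE : ∀ m, b m ∈ E := fun m => hb ▸ subset_span (mem_range_self m)
  refine ⟨echelonize b w, isEchelon_echelonize hw, le_antisymm ?_ ?_⟩
  · exact span_le.2 (range_subset_iff.2 (echelonize_mem hbE hwE))
  · refine hb ▸ span_le.2 (range_subset_iff.2 fun m => ?_)
    obtain ⟨n, hn⟩ := (eventually_residual_eq_zero hw m).exists
    have hspan := sub_residual_mem_span (b := b) (w := w) n m
    rw [hn, sub_zero] at hspan
    exact span_mono (image_subset_range _ _) hspan

namespace IsEchelon

section Ring
variable [CommRing 𝕜] (e : ℕ → ℕ → 𝕜)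

/-- The sequence `∑ₙ a n • e n`; its `k`-th coordinate is a finite sum when `e` is echelon. -/
def combination : (ℕ → 𝕜) →ₗ[𝕜] (ℕ → 𝕜) where
  toFun a k := ∑ i ∈ Finset.range (k + 1), a i * e i k
  map_add' a a' := by
    funext k
    simp [add_mul, Finset.sum_add_distrib]
  map_smul' c a := by
    funext k
    simp [Finset.mul_sum, mul_assoc]

lemma combination_apply (a : ℕ → 𝕜) (k : ℕ) :
    combination e a k = ∑ i ∈ Finset.range (k + 1), a i * e i k :=
  rfl

end Ring

section Field
variable [Field 𝕜] (e : ℕ → ℕ → 𝕜)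

/-- Forward substitution, solving `combination e a = y` for `a`. -/
def solve (y : ℕ → 𝕜) : ℕ → 𝕜
  | k => (e k k)⁻¹ * (y k - ∑ i ∈ (Finset.range k).attach, solve y i * e i k)
decreasing_by exact Finset.mem_range.mp i.2

lemma solve_apply (y : ℕ → 𝕜) (k : ℕ) :
    solve e y k = (e k k)⁻¹ * (y k - ∑ i ∈ Finset.range k, solve e y i * e i k) := by
  rw [solve, Finset.sum_attach (Finset.range k) (fun i => solve e y i * e i k)]

variable {e}

lemma combination_solve (he : IsEchelon e) (y : ℕ → 𝕜) : combination e (solve e y) = y := by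
  funext k
  rw [combination_apply, Finset.sum_range_succ, solve_apply e y k, mul_comm _ (e k k),
    mul_inv_cancel_left₀ (he.apply_self_ne_zero k), add_sub_cancel]

lemma solve_combination (he : IsEchelon e) (a : ℕ → 𝕜) : solve e (combination e a) = a := by
  funext k
  induction k using Nat.strong_induction_on with
  | _ k ih =>
  have hsum : ∑ i ∈ Finset.range k, solve e (combination e a) i * e i k =
      ∑ i ∈ Finset.range k, a i * e i k :=
    Finset.sum_congr rfl fun i hi => by rw [ih i (Finset.mem_range.mp hi)]
  rw [solve_apply, hsum, combination_apply, Finset.sum_range_succ, add_sub_cancel_left,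
    mul_comm (a k), inv_mul_cancel_left₀ (he.apply_self_ne_zero k)]

lemma combination_single (he : IsEchelon e) (n : ℕ) : combination e (Pi.single n 1) = e n := by
  funext k
  rw [combination_apply]
  simp only [Pi.single_apply, ite_mul, one_mul, zero_mul, Finset.sum_ite_eq', Finset.mem_range]
  split_ifs with h
  · rfl
  · exact (he.apply_of_lt (by omega)).symm

end Field

section Topology
variable [Field 𝕜] [TopologicalSpace 𝕜] [IsTopologicalRing 𝕜] {e : ℕ → ℕ → 𝕜}

lemma continuous_combination (e : ℕ → ℕ → 𝕜) : Continuous (combination e) :=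
  continuous_pi fun k =>
    continuous_finsetSum (Finset.range (k + 1)) fun i _ => (continuous_apply i).mul continuous_const

lemma continuous_solve (e : ℕ → ℕ → 𝕜) : Continuous (solve e) := by
  refine continuous_pi fun k => ?_
  induction k using Nat.strong_induction_on with
  | _ k ih =>
  simp_rw [solve_apply e _ k]
  exact continuous_const.mul ((continuous_apply k).sub
    (continuous_finsetSum _ fun i hi => (ih i (Finset.mem_range.mp hi)).mul continuous_const))

def toContinuousLinearEquiv (he : IsEchelon e) : (ℕ → 𝕜) ≃L[𝕜] (ℕ → 𝕜) where
  toLinearMap := combination e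
  invFun := solve e
  left_inv := solve_combination he
  right_inv := combination_solve he
  continuous_toFun := continuous_combination e
  continuous_invFun := continuous_solve e

lemma image_span_single (he : IsEchelon e) :
    he.toContinuousLinearEquiv '' span 𝕜 (range fun n => (Pi.single n 1 : ℕ → 𝕜)) =
      span 𝕜 (range e) := by
  rw [← ContinuousLinearEquiv.coe_toLinearEquiv, ← LinearEquiv.coe_toLinearMap, ← map_coe,
    map_span, ← range_comp]
  congr
  funext n
  exact combination_single he n

end Topology

end IsEchelon

lemma Dense.range_le_map [NontriviallyNormedField 𝕜] [CompleteSpace 𝕜]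
    {V W : Type*} [AddCommGroup V] [Module 𝕜 V] [TopologicalSpace V]
    [AddCommGroup W] [Module 𝕜 W] [TopologicalSpace W] [IsTopologicalAddGroup W]
    [ContinuousSMul 𝕜 W] [T2Space W] [FiniteDimensional 𝕜 W]
    {E : Submodule 𝕜 V} (hE : Dense (E : Set V)) (f : V →L[𝕜] W) :
    LinearMap.range (f : V →ₗ[𝕜] W) ≤ E.map (f : V →ₗ[𝕜] W) := by
  rintro _ ⟨x, rfl⟩
  have hx : f x ∈ closure (f '' E) :=
    image_closure_subset_closure_image f.continuous ⟨x, hE.closure_eq.symm ▸ mem_univ x, rfl⟩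
  rw [← SetLike.mem_coe, ← (closed_of_finiteDimensional (E.map (f : V →ₗ[𝕜] W))).closure_eq]
  exact hx

lemma Dense.exists_isEchelon [NontriviallyNormedField 𝕜] [CompleteSpace 𝕜]
    {E : Submodule 𝕜 (ℕ → 𝕜)} (hE : Dense (E : Set (ℕ → 𝕜))) :
    ∃ w : ℕ → ℕ → 𝕜, (∀ n, w n ∈ E) ∧ IsEchelon w := by
  have hpivot : ∀ n, ∃ v ∈ E, ∀ k ≤ n, v k = (Pi.single n 1 : ℕ → 𝕜) k := fun n => by
    let restrict : (ℕ → 𝕜) →L[𝕜] (Fin (n + 1) → 𝕜) :=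
      .pi fun k => .proj (k : ℕ)
    obtain ⟨v, hv, hrestrict⟩ := hE.range_le_map restrict ⟨Pi.single n 1, rfl⟩
    exact ⟨v, hv, fun k hk => congr_fun hrestrict ⟨k, by omega⟩⟩
  choose w hwE hw using hpivot
  exact ⟨w, hwE, ⟨fun hk => by simp [hw _ _ hk.le, hk.ne], fun n => by simp [hw n n le_rfl]⟩⟩

theorem Dense.exists_continuousLinearEquiv_image_span_single [NontriviallyNormedField 𝕜]
    [CompleteSpace 𝕜] {E : Submodule 𝕜 (ℕ → 𝕜)} (hE : Dense (E : Set (ℕ → 𝕜)))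
    {b : ℕ → ℕ → 𝕜} (hb : span 𝕜 (range b) = E) :
    ∃ T : (ℕ → 𝕜) ≃L[𝕜] (ℕ → 𝕜),
      T '' span 𝕜 (range fun n => (Pi.single n 1 : ℕ → 𝕜)) = E := by
  obtain ⟨w, hwE, hw⟩ := hE.exists_isEchelon
  obtain ⟨e, he, rfl⟩ := exists_isEchelon_span_eq hb hwE hw
  exact ⟨he.toContinuousLinearEquiv, he.image_span_single⟩

end

/-- `GL(ω)` acts transitively on the set of dense countably
infinite-dimensional linear subspaces of `ω = 𝕜^ℕ` with the product topology. -/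
theorem omega_transitive_on_dense_countable_dim_subspaces
    (𝕜 : Type*) [RCLike 𝕜]
    (E F : Submodule 𝕜 (ℕ → 𝕜))
    (hE : Dense (E : Set (ℕ → 𝕜))) (hF : Dense (F : Set (ℕ → 𝕜)))
    (hEdim : Nonempty (Module.Basis ℕ 𝕜 E)) (hFdim : Nonempty (Module.Basis ℕ 𝕜 F)) :
    ∃ T : (ℕ → 𝕜) ≃L[𝕜] (ℕ → 𝕜), T '' (E : Set (ℕ → 𝕜)) = (F : Set (ℕ → 𝕜)) := by
  obtain ⟨bE⟩ := hEdim
  obtain ⟨bF⟩ := hFdim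
  obtain ⟨S, hS⟩ := hE.exists_continuousLinearEquiv_image_span_single
    ((span_range_subtype_eq_top_iff E fun n => (bE n).2).1 bE.span_eq)
  obtain ⟨T, hT⟩ := hF.exists_continuousLinearEquiv_image_span_single
    ((span_range_subtype_eq_top_iff F fun n => (bF n).2).1 bF.span_eq)
  refine ⟨S.symm.trans T, ?_⟩
  rw [← hS, ← hT, image_image]
  simp
end

section
/- Let X be a locally convex topological vector space over 𝕂 (𝕂 = ℝ or ℂ), p a continuous seminorm on X, D a Banach disk in X, (xₙ) a sequence in X_D and (fₙ) a sequence of continuous linear functionals on X such that c = Σₙ p*(fₙ)·p_D(xₙ) < ∞. Then for every x ∈ X the series Σₙ fₙ(x)xₙ converges in X_D (hence in X), and the formula T x = Σₙ fₙ(x)xₙ defines a continuous linear operator on X satisfying p_D(Tx) ≤ c·p(x) for all x. -/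
/-!
The gauge of `D` is a complete seminorm `p_D` on `X_D = span D`, and
`‖fₙ y‖ · p_D(xₙ) ≤ p*(fₙ) · p_D(xₙ) · p(y)`, so `Σ fₙ(y) xₙ` is absolutely summable in `X_D`
with sum at most `c · p(y)`. As `p_D` need not be a norm, the sums are taken in the separation
quotient of `X_D`, where they are linear in `y`, and lifted back by a linear section. Since `D`
is bounded, `p_D`-small vectors are small in `X`, which gives continuity.
-/

open scoped ENNReal Pointwise
open Filter Topology

noncomputable section

/-- The Banach-disk property: `D` is bounded, convex, balanced, and the span of `D`
is complete with respect to the Minkowski gauge norm `p_D` of `D`. -/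
def IsBanachDisk (𝕜 : Type*) [RCLike 𝕜] {X : Type*} [AddCommGroup X] [Module 𝕜 X]
    [Module ℝ X] [TopologicalSpace X] (D : Set X) : Prop :=
  Bornology.IsVonNBounded 𝕜 D ∧ Convex ℝ D ∧ Balanced 𝕜 D ∧
  ∀ u : ℕ → X, (∀ n, u n ∈ Submodule.span 𝕜 D) →
    (∀ ε : ℝ, 0 < ε → ∃ N, ∀ m, N ≤ m → ∀ n, N ≤ n → gauge D (u m - u n) < ε) →
    ∃ y ∈ Submodule.span 𝕜 D,
      Filter.Tendsto (fun n => gauge D (y - u n)) Filter.atTop (nhds 0)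

/-- `p*(f) = sup {|f x| : p x ≤ 1}`, the dual quantity of `f` relative to the seminorm
`p`, with values in `[0,∞]`. -/
def pStar {𝕜 X : Type*} [RCLike 𝕜] [AddCommGroup X] [Module 𝕜 X] [TopologicalSpace X]
    (p : Seminorm 𝕜 X) (f : X →L[𝕜] 𝕜) : ℝ≥0∞ :=
  ⨆ x ∈ {y : X | p y ≤ 1}, (‖f x‖₊ : ℝ≥0∞)

section pStar

variable {𝕜 X : Type*} [RCLike 𝕜] [AddCommGroup X] [Module 𝕜 X] [TopologicalSpace X]
  {p : Seminorm 𝕜 X} {f : X →L[𝕜] 𝕜}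

lemma norm_apply_le_toReal_pStar (hf : pStar p f ≠ ⊤) {z : X} (hz : p z ≤ 1) :
    ‖f z‖ ≤ (pStar p f).toReal := by
  have h : (‖f z‖₊ : ℝ≥0∞) ≤ pStar p f :=
    le_iSup₂ (f := fun x (_ : x ∈ {y : X | p y ≤ 1}) => (‖f x‖₊ : ℝ≥0∞)) z hz
  simpa using ENNReal.toReal_mono hf h

lemma norm_apply_le_toReal_pStar_mul (hf : pStar p f ≠ ⊤) (y : X) :
    ‖f y‖ ≤ (pStar p f).toReal * p y := by
  have hlim : Tendsto (fun t => (pStar p f).toReal * t) (𝓝[>] p y)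
      (𝓝 ((pStar p f).toReal * p y)) :=
    ((continuous_const_mul _).tendsto _).mono_left nhdsWithin_le_nhds
  refine ge_of_tendsto hlim ?_
  filter_upwards [self_mem_nhdsWithin] with t (ht : p y < t)
  have ht0 : 0 < t := (apply_nonneg p y).trans_lt ht
  have h := norm_apply_le_toReal_pStar hf (z := ((t⁻¹ : ℝ) : 𝕜) • y) (by
    rw [map_smul_eq_mul, RCLike.norm_ofReal, abs_inv, abs_of_pos ht0]
    exact inv_mul_le_one_of_le₀ ht.le ht0.le)
  rw [map_smul, norm_smul, RCLike.norm_ofReal, abs_inv, abs_of_pos ht0, inv_mul_le_iff₀ ht0] at h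
  linarith

lemma norm_apply_mul_le_toReal_pStar_mul {r : ℝ} (hr : 0 ≤ r)
    (hfin : pStar p f * ENNReal.ofReal r ≠ ⊤) (y : X) :
    ‖f y‖ * r ≤ (pStar p f * ENNReal.ofReal r).toReal * p y := by
  rcases hr.eq_or_lt with rfl | hr
  · simp
  have hf : pStar p f ≠ ⊤ := fun h => hfin (by rw [h, ENNReal.top_mul (by simpa using hr)])
  rw [ENNReal.toReal_mul, ENNReal.toReal_ofReal hr.le, mul_right_comm]
  exact mul_le_mul_of_nonneg_right (norm_apply_le_toReal_pStar_mul hf y) hr.le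

end pStar

theorem Seminorm.exists_linearMap_tendsto_sum_smul {𝕜 E V : Type*} [NormedField 𝕜]
    [AddCommGroup E] [Module 𝕜 E] [AddCommGroup V] [Module 𝕜 V] (q : Seminorm 𝕜 V)
    (hq : ∀ u : ℕ → V, (∀ ε > 0, ∃ N, ∀ m ≥ N, ∀ n ≥ N, q (u m - u n) < ε) →
      ∃ v, Tendsto (fun n => q (v - u n)) atTop (𝓝 0))
    (f : ℕ → E →ₗ[𝕜] 𝕜) (v : ℕ → V) (hsum : ∀ y, Summable fun n => ‖f n y‖ * q (v n)) :
    ∃ T : E →ₗ[𝕜] V, ∀ y,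
      Tendsto (fun N => q (T y - ∑ n ∈ Finset.range N, f n y • v n)) atTop (𝓝 0) ∧
      q (T y) ≤ ∑' n, ‖f n y‖ * q (v n) := by
  let _ : SeminormedAddCommGroup V := q.toAddGroupSeminorm.toSeminormedAddCommGroup
  let _ : NormedSpace 𝕜 V := ⟨fun a w => (map_smul_eq_mul q a w).le⟩
  have hnorm : ∀ w : V, ‖w‖ = q w := fun _ => rfl
  have _ : CompleteSpace V := Metric.complete_of_cauchySeq_tendsto fun u hu => by
    obtain ⟨w, hw⟩ := hq u (by simpa only [dist_eq_norm, hnorm] using Metric.cauchySeq_iff.1 hu)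
    refine ⟨w, tendsto_iff_norm_sub_tendsto_zero.2 ?_⟩
    simp_rw [norm_sub_rev _ w]
    exact hw
  let π := SeparationQuotient.mkCLM 𝕜 V
  have hterm : ∀ y n, ‖π (f n y • v n)‖ = ‖f n y‖ * q (v n) := fun y n =>
    norm_smul (f n y) (v n)
  have hsummable : ∀ y, Summable fun n => π (f n y • v n) := fun y =>
    .of_norm_bounded (hsum y) fun n => (hterm y n).le
  let T₀ : E →ₗ[𝕜] SeparationQuotient V :=
    linearMapOfTendsto (fun y => ∑' n, π (f n y • v n))
      (fun N => ∑ n ∈ Finset.range N, (f n).smulRight (π (v n)))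
      (tendsto_pi_nhds.2 fun y => by simpa using (hsummable y).hasSum.tendsto_sum_nat)
  let T := (SeparationQuotient.outCLM 𝕜 V).toLinearMap ∘ₗ T₀
  have hπT : ∀ y, π (T y) = ∑' n, π (f n y • v n) := fun y =>
    SeparationQuotient.mk_outCLM 𝕜 (T₀ y)
  refine ⟨T, fun y => ⟨?_, ?_⟩⟩
  · refine (tendsto_iff_norm_sub_tendsto_zero.1 (hsummable y).hasSum.tendsto_sum_nat).congr
      fun N => ?_
    rw [norm_sub_rev, ← map_sum, ← hπT, ← map_sub]
    rfl
  · rw [← hnorm, ← SeparationQuotient.norm_mk]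
    refine (congrArg norm (hπT y)).trans_le ?_
    exact tsum_of_norm_bounded (hsum y).hasSum fun n => (hterm y n).le

section DiskSpan

variable {𝕜 X : Type*} [RCLike 𝕜] [AddCommGroup X] [Module 𝕜 X] [Module ℝ X]
  [IsScalarTower ℝ 𝕜 X] {D : Set X}

lemma Balanced.restrictScalars_real (hbal : Balanced 𝕜 D) : Balanced ℝ D := by
  rintro a ha _ ⟨d, hd, rfl⟩
  show a • d ∈ D
  rw [RCLike.real_smul_eq_coe_smul (K := 𝕜)]
  exact hbal.smul_mem (by simpa using ha) hd

lemma exists_pos_mem_smul_of_mem_span (hne : D.Nonempty) (hconv : Convex ℝ D)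
    (hbal : Balanced 𝕜 D) {z : X} (hz : z ∈ Submodule.span 𝕜 D) : ∃ r > (0 : ℝ), z ∈ r • D := by
  induction hz using Submodule.span_induction with
  | mem d hd => exact ⟨1, one_pos, by rwa [one_smul]⟩
  | zero => exact ⟨1, one_pos, Set.zero_mem_smul_set (hbal.zero_mem hne)⟩
  | add z w _ _ hz hw =>
    obtain ⟨r, hr, hzr⟩ := hz
    obtain ⟨s, hs, hws⟩ := hw
    exact ⟨r + s, add_pos hr hs, hconv.add_smul hr.le hs.le ▸ Set.add_mem_add hzr hws⟩
  | smul a z _ hz =>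
    obtain ⟨r, hr, hzr⟩ := hz
    refine ⟨r * (‖a‖ + 1), by positivity, ?_⟩
    have haD : a • D ⊆ (‖a‖ + 1 : ℝ) • D :=
      hbal.smul_mono (by rw [Real.norm_of_nonneg (by positivity)]; linarith)
    rw [mul_smul]
    refine Set.smul_set_mono haD ?_
    rw [smul_comm]
    exact Set.smul_mem_smul_set hzr

lemma absorbent_span_preimage (hne : D.Nonempty) (hconv : Convex ℝ D) (hbal : Balanced 𝕜 D) :
    Absorbent ℝ ((↑) ⁻¹' D : Set (Submodule.span 𝕜 D)) := by
  intro z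
  obtain ⟨r, hr, hzr⟩ := exists_pos_mem_smul_of_mem_span hne hconv hbal z.2
  refine absorbs_iff_norm.2 ⟨r, fun c hc => Set.singleton_subset_iff.2 ?_⟩
  have hc0 : c ≠ 0 := norm_pos_iff.1 (hr.trans_le hc)
  rw [Set.mem_smul_set_iff_inv_smul_mem₀ hc0, Set.mem_preimage, Submodule.coe_smul_of_tower,
    ← Set.mem_smul_set_iff_inv_smul_mem₀ hc0]
  exact hbal.restrictScalars_real.smul_mono (by rwa [Real.norm_of_nonneg hr.le]) hzr

lemma gauge_span_preimage (z : Submodule.span 𝕜 D) :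
    gauge ((↑) ⁻¹' D : Set (Submodule.span 𝕜 D)) z = gauge D (z : X) := by
  simp only [gauge_def', Set.mem_preimage, Submodule.coe_smul_of_tower]

/-- The norm `p_D` of `X_D`. -/
def diskSeminorm (hne : D.Nonempty) (hconv : Convex ℝ D) (hbal : Balanced 𝕜 D) :
    Seminorm 𝕜 (Submodule.span 𝕜 D) :=
  gaugeSeminorm (hbal.mulActionHom_preimage (Submodule.span 𝕜 D).subtype.toMulActionHom)
    (hconv.linear_preimage ((Submodule.span 𝕜 D).subtype.restrictScalars ℝ))
    (absorbent_span_preimage hne hconv hbal)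

@[simp]
lemma diskSeminorm_apply (hne : D.Nonempty) (hconv : Convex ℝ D) (hbal : Balanced 𝕜 D)
    (z : Submodule.span 𝕜 D) : diskSeminorm hne hconv hbal z = gauge D (z : X) :=
  gauge_span_preimage z

lemma Bornology.IsVonNBounded.exists_pos_forall_diskSeminorm_lt_mem [TopologicalSpace X]
    (hbdd : Bornology.IsVonNBounded 𝕜 D) (hne : D.Nonempty) (hconv : Convex ℝ D)
    (hbal : Balanced 𝕜 D) {W : Set X} (hW : W ∈ 𝓝 0) :
    ∃ δ > 0, ∀ z, diskSeminorm hne hconv hbal z < δ → (z : X) ∈ W := by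
  have hsmall_smul : ∀ᶠ a : 𝕜 in 𝓝 0, a • D ⊆ W :=
    tendsto_smallSets_iff.1 hbdd.tendsto_smallSets_nhds W hW
  obtain ⟨δ, hδ, hsmall⟩ := Metric.eventually_nhds_iff.1 hsmall_smul
  refine ⟨δ, hδ, fun z hz => ?_⟩
  have hz' : gauge ((↑) ⁻¹' D : Set (Submodule.span 𝕜 D)) z < δ := by
    rw [gauge_span_preimage]; simpa using hz
  have habs := absorbent_span_preimage hne hconv hbal
  obtain ⟨b, hb, hbδ, d, hd, rfl⟩ := exists_lt_of_gauge_lt habs hz'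
  refine hsmall (y := (b : 𝕜)) (by simpa [abs_of_pos hb] using hbδ) ⟨d, hd, ?_⟩
  show ((b : ℝ) : 𝕜) • (d : X) = ((b • d : Submodule.span 𝕜 D) : X)
  rw [Submodule.coe_smul_of_tower, RCLike.real_smul_eq_coe_smul (K := 𝕜)]

lemma continuous_subtype_comp_of_diskSeminorm_le [TopologicalSpace X] [IsTopologicalAddGroup X]
    (hbdd : Bornology.IsVonNBounded 𝕜 D) (hne : D.Nonempty) (hconv : Convex ℝ D)
    (hbal : Balanced 𝕜 D) {p : Seminorm 𝕜 X} (hp : Continuous p) {C : ℝ}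
    (L : X →ₗ[𝕜] Submodule.span 𝕜 D) (hL : ∀ y, diskSeminorm hne hconv hbal (L y) ≤ C * p y) :
    Continuous ((Submodule.span 𝕜 D).subtype ∘ₗ L) := by
  refine continuous_of_continuousAt_zero _ ?_
  rw [ContinuousAt, map_zero]
  intro W hW
  obtain ⟨δ, hδ, hδW⟩ := hbdd.exists_pos_forall_diskSeminorm_lt_mem hne hconv hbal hW
  have hball : {y | p y < δ / (|C| + 1)} ∈ 𝓝 (0 : X) :=
    (isOpen_lt hp continuous_const).mem_nhds (show p 0 < _ by rw [map_zero]; positivity)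
  refine mem_map.2 (mem_of_superset hball fun y (hy : p y < _) => hδW _ ((hL y).trans_lt ?_))
  calc C * p y ≤ (|C| + 1) * p y := by nlinarith [le_abs_self C, apply_nonneg p y]
    _ < (|C| + 1) * (δ / (|C| + 1)) := by gcongr
    _ = δ := by field_simp

end DiskSpan

theorem operator_from_absolutely_convergent_series_general
    (𝕜 : Type*) [RCLike 𝕜] (X : Type*) [AddCommGroup X] [Module 𝕜 X]
    [Module ℝ X] [IsScalarTower ℝ 𝕜 X]
    -- X is a locally convex TVS
    [TopologicalSpace X] [IsTopologicalAddGroup X]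
    -- a continuous seminorm p and a Banach disk D
    (p : Seminorm 𝕜 X) (hp : Continuous p)
    (D : Set X) (hD : IsBanachDisk 𝕜 D)
    -- the data of the series
    (x : ℕ → X) (hx : ∀ n, x n ∈ Submodule.span 𝕜 D)
    (f : ℕ → X →L[𝕜] 𝕜)
    (c : ℝ≥0∞) (hc : c = ∑' n : ℕ, pStar p (f n) * ENNReal.ofReal (gauge D (x n)))
    (hcfin : c < ⊤) :
    ∃ T : X →L[𝕜] X, ∀ y : X,
      T y ∈ Submodule.span 𝕜 D ∧
      Filter.Tendsto
        (fun N => gauge D (T y - ∑ n ∈ Finset.range N, f n y • x n))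
        Filter.atTop (nhds 0) ∧
      ENNReal.ofReal (gauge D (T y)) ≤ c * ENNReal.ofReal (p y) := by
  obtain ⟨hbdd, hconv, hbal, hcomplete⟩ := hD
  rcases D.eq_empty_or_nonempty with rfl | hne
  · have hx0 : ∀ n, x n = 0 := fun n => by simpa using hx n
    exact ⟨0, fun y => by simp [hx0]⟩
  let q := diskSeminorm hne hconv hbal
  let a n := pStar p (f n) * ENNReal.ofReal (gauge D (x n))
  have ha_ne_top : ∀ n, a n ≠ ⊤ := fun n =>
    ne_top_of_le_ne_top (hc ▸ hcfin.ne) (ENNReal.le_tsum n)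
  have ha : Summable fun n => (a n).toReal := ENNReal.summable_toReal (hc ▸ hcfin.ne)
  have hterm : ∀ y n, ‖f n y‖ * q ⟨x n, hx n⟩ ≤ (a n).toReal * p y := fun y n => by
    simpa only [q, diskSeminorm_apply] using
      norm_apply_mul_le_toReal_pStar_mul (gauge_nonneg _) (ha_ne_top n) y
  have hq : ∀ u : ℕ → Submodule.span 𝕜 D,
      (∀ ε > 0, ∃ N, ∀ m ≥ N, ∀ n ≥ N, q (u m - u n) < ε) →
      ∃ v, Tendsto (fun n => q (v - u n)) atTop (𝓝 0) := fun u hu => by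
    obtain ⟨v, hv, hlim⟩ := hcomplete (fun n => u n) (fun n => (u n).2) (by simpa [q] using hu)
    exact ⟨⟨v, hv⟩, by simpa [q] using hlim⟩
  have hsum : ∀ y, Summable fun n => ‖f n y‖ * q ⟨x n, hx n⟩ := fun y =>
    .of_nonneg_of_le (fun n => by positivity) (hterm y) (ha.mul_right (p y))
  obtain ⟨L, hL⟩ := q.exists_linearMap_tendsto_sum_smul hq (fun n => (f n : X →ₗ[𝕜] 𝕜))
    (fun n => ⟨x n, hx n⟩) hsum
  have hbound : ∀ y, q (L y) ≤ c.toReal * p y := fun y =>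
    calc q (L y) ≤ ∑' n, ‖f n y‖ * q ⟨x n, hx n⟩ := (hL y).2
      _ ≤ ∑' n, (a n).toReal * p y := (hsum y).tsum_le_tsum (hterm y) (ha.mul_right (p y))
      _ = c.toReal * p y := by rw [tsum_mul_right, hc, ENNReal.tsum_toReal_eq ha_ne_top]
  refine ⟨⟨_, continuous_subtype_comp_of_diskSeminorm_le hbdd hne hconv hbal hp L hbound⟩,
    fun y => ⟨(L y).2, by simpa [q] using (hL y).1, ?_⟩⟩
  calc ENNReal.ofReal (gauge D (L y)) ≤ ENNReal.ofReal (c.toReal * p y) :=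
        ENNReal.ofReal_le_ofReal (by simpa [q] using hbound y)
    _ = c * ENNReal.ofReal (p y) := by
        rw [ENNReal.ofReal_mul ENNReal.toReal_nonneg, ENNReal.ofReal_toReal hcfin.ne]

/-- Lemma nuc1, first part: if `c = Σₙ p*(fₙ)·p_D(xₙ) < ∞`, then for each
`x` the series `Σₙ fₙ(x)·xₙ` converges in `X_D` (with respect to the gauge norm `p_D`,
hence also in `X`), and `T x = Σₙ fₙ(x)·xₙ` defines a continuous linear operator on `X`
with `p_D(T x) ≤ c·p(x)`. -/
theorem operator_from_absolutely_convergent_series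
    (𝕜 : Type*) [RCLike 𝕜] (X : Type*) [AddCommGroup X] [Module 𝕜 X]
    [Module ℝ X] [IsScalarTower ℝ 𝕜 X]
    -- X is a locally convex TVS
    [TopologicalSpace X] [IsTopologicalAddGroup X] [ContinuousSMul 𝕜 X]
    [LocallyConvexSpace ℝ X]
    -- a continuous seminorm p and a Banach disk D
    (p : Seminorm 𝕜 X) (hp : Continuous p)
    (D : Set X) (hD : IsBanachDisk 𝕜 D)
    -- the data of the series
    (x : ℕ → X) (hx : ∀ n, x n ∈ Submodule.span 𝕜 D)
    (f : ℕ → X →L[𝕜] 𝕜)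
    (c : ℝ≥0∞) (hc : c = ∑' n : ℕ, pStar p (f n) * ENNReal.ofReal (gauge D (x n)))
    (hcfin : c < ⊤) :
    ∃ T : X →L[𝕜] X, ∀ y : X,
      T y ∈ Submodule.span 𝕜 D ∧
      Filter.Tendsto
        (fun N => gauge D (T y - ∑ n ∈ Finset.range N, f n y • x n))
        Filter.atTop (nhds 0) ∧
      ENNReal.ofReal (gauge D (T y)) ≤ c * ENNReal.ofReal (p y) :=
  operator_from_absolutely_convergent_series_general 𝕜 X p hp D hD x hx f c hc hcfin
end
end

section
/- Let E be a vector space over 𝕂 (𝕂 = ℝ or ℂ), f₁, …, f_{n+1} linearly independent linear functionals on E, A a subset of E with span(A) = E, and x₁, …, xₙ ∈ E such that the n×n matrix (f_j(x_k))_{1≤j,k≤n} is invertible. Then there exists x_{n+1} ∈ A such that the (n+1)×(n+1) matrix (f_j(x_k))_{1≤j,k≤n+1} is invertible. -/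
noncomputable section

/-- Lemma ome1: given linearly independent functionals `f₁, …, f_{n+1}`,
a spanning set `A` and vectors `x₁, …, xₙ` with `(f_j(x_k))_{j,k ≤ n}` invertible, there
is `x_{n+1} ∈ A` making the `(n+1) × (n+1)` matrix `(f_j(x_k))` invertible. -/
theorem extend_invertible_matrix_vector
    (𝕜 : Type*) [RCLike 𝕜] (E : Type*) [AddCommGroup E] [Module 𝕜 E]
    (n : ℕ) (f : Fin (n + 1) → Module.Dual 𝕜 E) (hf : LinearIndependent 𝕜 f)
    (A : Set E) (hA : Submodule.span 𝕜 A = ⊤)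
    (x : Fin n → E)
    (hx : (Matrix.of fun j k : Fin n => f (Fin.castSucc j) (x k)).det ≠ 0) :
    ∃ y ∈ A,
      (Matrix.of fun j k : Fin (n + 1) => f j ((Fin.snoc x y : Fin (n + 1) → E) k)).det ≠ 0 := by
  classical
  set c : Fin (n + 1) → 𝕜 := fun i =>
    (-1 : 𝕜) ^ ((i : ℕ) + n) *
      (Matrix.of fun p k : Fin n => f (i.succAbove p) (x k)).det with hc
  set g : Module.Dual 𝕜 E := ∑ i, c i • f i with hg
  have hdet : ∀ y : E,
      (Matrix.of fun j k : Fin (n + 1) => f j ((Fin.snoc x y : Fin (n + 1) → E) k)).det = g y := by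
    intro y
    rw [Matrix.det_succ_column _ (Fin.last n)]
    simp only [hg, LinearMap.sum_apply, LinearMap.smul_apply, smul_eq_mul, hc]
    refine Finset.sum_congr rfl fun i _ => ?_
    have h1 : ∀ k : Fin n, (Fin.snoc x y : Fin (n+1) → E) ((Fin.last n).succAbove k) = x k := by
      intro k; simp [Fin.succAbove_last]
    have h2 : (Matrix.of fun j k : Fin (n+1) => f j ((Fin.snoc x y : Fin (n+1) → E) k)).submatrix
        i.succAbove (Fin.last n).succAbove
        = Matrix.of fun p k : Fin n => f (i.succAbove p) (x k) := by
      ext p k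
      simp [Matrix.submatrix_apply, h1]
    rw [h2]
    simp only [Matrix.of_apply, Fin.snoc_last, Fin.val_last]
    ring
  have hclast : c (Fin.last n) ≠ 0 := by
    simpa [hc, Fin.succAbove_last, Fin.val_last] using hx
  have hgne : g ≠ 0 := by
    intro h0
    exact hclast (Fintype.linearIndependent_iff.mp hf c (by rw [← hg, h0]) (Fin.last n))
  by_contra h
  push_neg at h
  apply hgne
  have hker : ∀ y ∈ A, g y = 0 := fun y hy => by rw [← hdet y]; exact h y hy
  have : Submodule.span 𝕜 A ≤ LinearMap.ker g := Submodule.span_le.mpr hker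
  ext z
  exact this (hA ▸ Submodule.mem_top)
end
end

section
/- Let E be a vector space over 𝕂 (𝕂 = ℝ or ℂ), x₁, …, x_{n+1} linearly independent elements of E, A a collection of linear functionals on E that separates the points of E, and f₁, …, fₙ linear functionals on E such that the n×n matrix (f_j(x_k))_{1≤j,k≤n} is invertible. Then there exists f_{n+1} ∈ A such that the (n+1)×(n+1) matrix (f_j(x_k))_{1≤j,k≤n+1} is invertible. -/
noncomputable section

/-- Lemma ome2: given linearly independent vectors `x₁, …, x_{n+1}`, a
point-separating collection `A` of linear functionals and functionals `f₁, …, fₙ` with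
`(f_j(x_k))_{j,k ≤ n}` invertible, there is `f_{n+1} ∈ A` making the `(n+1) × (n+1)`
matrix `(f_j(x_k))` invertible. -/
theorem extend_invertible_matrix_functional
    (𝕜 : Type*) [RCLike 𝕜] (E : Type*) [AddCommGroup E] [Module 𝕜 E]
    (n : ℕ) (x : Fin (n + 1) → E) (hx : LinearIndependent 𝕜 x)
    (A : Set (Module.Dual 𝕜 E)) (hA : ∀ e : E, e ≠ 0 → ∃ f ∈ A, f e ≠ 0)
    (f : Fin n → Module.Dual 𝕜 E)
    (hf : (Matrix.of fun j k : Fin n => f j (x (Fin.castSucc k))).det ≠ 0) :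
    ∃ g ∈ A,
      (Matrix.of fun j k : Fin (n + 1) =>
        ((Fin.snoc f g : Fin (n + 1) → Module.Dual 𝕜 E) j) (x k)).det ≠ 0 := by
  -- cofactor determinants (independent of the last row)
  set d : Fin (n + 1) → 𝕜 := fun j =>
    (Matrix.of fun j' k' : Fin n => f j' (x (j.succAbove k'))).det with hd
  set y : E := ∑ j : Fin (n + 1), ((-1 : 𝕜) ^ ((n : ℕ) + (j : ℕ)) * d j) • x j with hy
  have hdl : d (Fin.last n) =
      (Matrix.of fun j k : Fin n => f j (x (Fin.castSucc k))).det := by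
    simp [hd, Fin.succAbove_last]
  have hy0 : y ≠ 0 := by
    intro h
    have := (Fintype.linearIndependent_iff.1 hx) _ h (Fin.last n)
    rw [hdl] at this
    simp [Fin.val_last, ← two_mul, pow_mul] at this
    exact hf this
  obtain ⟨g, hgA, hgy⟩ := hA y hy0
  refine ⟨g, hgA, ?_⟩
  have hdet : (Matrix.of fun j k : Fin (n + 1) =>
      ((Fin.snoc f g : Fin (n + 1) → Module.Dual 𝕜 E) j) (x k)).det = g y := by
    rw [Matrix.det_succ_row _ (Fin.last n)]
    have hrow : ∀ j' : Fin n, ∀ k' : Fin n,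
        ((Matrix.of fun j k : Fin (n + 1) =>
          ((Fin.snoc f g : Fin (n + 1) → Module.Dual 𝕜 E) j) (x k)).submatrix
            (Fin.last n).succAbove (fun k : Fin n => (Fin.last n).succAbove k)) j' k'
          = f j' (x ((Fin.last n).succAbove k')) := by
      intro j' k'
      simp [Matrix.submatrix, Fin.succAbove_last, Fin.snoc_castSucc]
    simp only [hy, map_sum, map_smul, smul_eq_mul]
    refine Finset.sum_congr rfl fun j _ => ?_
    have hsub : ((Matrix.of fun j k : Fin (n + 1) =>
        ((Fin.snoc f g : Fin (n + 1) → Module.Dual 𝕜 E) j) (x k)).submatrix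
          (Fin.last n).succAbove j.succAbove).det = d j := by
      congr 1
      ext j' k'
      simp [Matrix.submatrix, Fin.succAbove_last, Fin.snoc_castSucc, hd]
    rw [hsub]
    simp [Fin.snoc_last, Fin.val_last]
    ring
  rw [hdet]
  exact hgy
end
end

section
/- Let E be a dense linear subspace of ω = 𝕂^ℕ (product topology, 𝕂 = ℝ or ℂ) of countably infinite dimension. Then there exist a Hamel basis (vₙ)_{n∈ℕ} of E and a bijection α : ℕ → ℕ such that for every n ∈ ℕ the α(n)-th coordinate of vₙ equals 1, and the α(k)-th coordinate of vₙ equals 0 whenever k < n. -/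
/-!
Build the pairs `(vₙ, αₙ)` one at a time, with `vₙ ∈ E`, `vₙ (αₙ) = 1` and `vₙ` vanishing at
the earlier pivots `αₖ`; such a triangular family is automatically linearly independent with `α`
injective. The steps alternate, through `ℕ ≃ ℕ ⊕ ℕ`, between two tasks. To absorb the basis
vector `e m`, eliminate it against the earlier `vₖ`; if a nonzero remainder is left, normalise it at
one of its nonzero coordinates. To make `j` a pivot, use density: the restriction of `E` to
finitely many coordinates is a dense, finite-dimensional (hence closed) subspace, so it is
everything, and some `x ∈ E` is `1` at `j` and `0` at the earlier pivots.
-/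

open Set Submodule

theorem Submodule.exists_mem_eqOn_of_dense {𝕜 ι : Type*} [NontriviallyNormedField 𝕜]
    [CompleteSpace 𝕜] {E : Submodule 𝕜 (ι → 𝕜)} (hE : Dense (E : Set (ι → 𝕜)))
    (S : Finset ι) (y : ι → 𝕜) : ∃ x ∈ E, EqOn x y S := by
  let π : (ι → 𝕜) →ₗ[𝕜] (S → 𝕜) := LinearMap.funLeft 𝕜 𝕜 (↑)
  have hπ : Continuous π := continuous_pi fun i => continuous_apply _
  have hdense : Dense (E.map π : Set (S → 𝕜)) := by
    rw [map_coe]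
    exact (LinearMap.funLeft_surjective_of_injective _ _ _ Subtype.val_injective).denseRange
      |>.dense_image hπ hE
  have htop : (E.map π : Set (S → 𝕜)) = univ := by
    rw [← (E.map π).closed_of_finiteDimensional.closure_eq, hdense.closure_eq]
  obtain ⟨x, hx, hxy⟩ : (fun i : S => y i) ∈ E.map π := by
    rw [← SetLike.mem_coe, htop]; trivial
  exact ⟨x, hx, fun i hi => congrFun hxy ⟨i, hi⟩⟩

theorem Submodule.exists_mem_pivot_of_dense {𝕜 ι : Type*} [NontriviallyNormedField 𝕜]
    [CompleteSpace 𝕜] [Infinite ι] {E : Submodule 𝕜 (ι → 𝕜)} (hE : Dense (E : Set (ι → 𝕜)))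
    (S : Finset ι) (j : ι) :
    ∃ x ∈ E, ∃ a, x a = 1 ∧ (∀ s ∈ S, x s = 0) ∧ (j = a ∨ j ∈ S) := by
  classical
  obtain ⟨a, haS, hja⟩ : ∃ a ∉ S, j = a ∨ j ∈ S := by
    by_cases hj : j ∈ S
    · obtain ⟨a, ha⟩ := Infinite.exists_notMem_finset S
      exact ⟨a, ha, Or.inr hj⟩
    · exact ⟨j, hj, Or.inl rfl⟩
  obtain ⟨x, hxE, hx⟩ := exists_mem_eqOn_of_dense hE (insert a S) (Pi.single a 1)
  refine ⟨x, hxE, a, ?_, fun s hs => ?_, hja⟩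
  · simpa using hx (Finset.mem_insert_self a S)
  · have hsa : s ≠ a := fun h => haS (h ▸ hs)
    simpa [hsa] using hx (Finset.mem_insert_of_mem hs)

section DualTriangular

variable {R M : Type*} [CommRing R] [AddCommGroup M] [Module R M]
  {v : ℕ → M} {f : ℕ → Module.Dual R M}

theorem exists_sub_mem_span_forall_dual_eq_zero {n : ℕ} (hv : ∀ k < n, f k (v k) = 1)
    (hf : ∀ k < n, ∀ i < k, f i (v k) = 0) (y : M) :
    ∃ w, y - w ∈ span R (v '' Iio n) ∧ ∀ k < n, f k w = 0 := by
  induction n with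
  | zero => exact ⟨y, by simp, by simp⟩
  | succ n ih =>
    obtain ⟨w, hw, hw0⟩ := ih (fun k hk => hv k (by omega)) (fun k hk => hf k (by omega))
    refine ⟨w - f n w • v n, ?_, fun k hk => ?_⟩
    · rw [sub_sub_eq_add_sub, add_sub_right_comm]
      exact add_mem (span_mono (image_mono (Iio_subset_Iio n.le_succ)) hw)
        (smul_mem _ _ (subset_span ⟨n, Nat.lt_succ_self n, rfl⟩))
    · rcases Nat.lt_succ_iff_lt_or_eq.mp hk with hk | rfl
      · simp [hw0 k hk, hf n (by omega) k hk]
      · simp [hv k (by omega)]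

theorem linearIndependent_of_dual_triangular (hv : ∀ n, f n (v n) = 1)
    (hf : ∀ n, ∀ k < n, f k (v n) = 0) : LinearIndependent R v := by
  rw [linearIndependent_iff']
  intro s g hsum i
  induction i using Nat.strong_induction_on with
  | _ i ih =>
    intro hi
    have := congrArg (f i) hsum
    rw [map_sum, map_zero, Finset.sum_eq_single i] at this
    · simpa [hv i] using this
    · intro k hk hki
      rcases lt_or_gt_of_ne hki with hlt | hgt
      · simp [ih k hlt hk]
      · simp [hf k i hgt]
    · exact fun h => (h hi).elim

end DualTriangular

noncomputable def seqOfImageIio {β : Type*} (step : ℕ → Set β → β) : ℕ → β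
  | n => step n (range fun k : Iio n => seqOfImageIio step k)
decreasing_by exact k.2

theorem seqOfImageIio_eq {β : Type*} (step : ℕ → Set β → β) (n : ℕ) :
    seqOfImageIio step n = step n (seqOfImageIio step '' Iio n) := by
  rw [seqOfImageIio, image_eq_range]

theorem exists_seq_of_forall_exists_image_Iio {β : Type*} [Nonempty β]
    (P : ℕ → Set β → β → Prop)
    (h : ∀ n (f : ℕ → β), (∀ k < n, P k (f '' Iio k) (f k)) → ∃ b, P n (f '' Iio n) b) :
    ∃ f : ℕ → β, ∀ n, P n (f '' Iio n) (f n) := by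
  refine ⟨seqOfImageIio fun n s => Classical.epsilon (P n s), fun n => ?_⟩
  induction n using Nat.strong_induction_on with
  | _ n ih =>
    rw [seqOfImageIio_eq]
    exact Classical.epsilon_spec (h n _ ih)

theorem insert_image_Iio_subset_range {β : Type*} (f : ℕ → β) (n : ℕ) :
    insert (f n) (f '' Iio n) ⊆ range f :=
  insert_subset (mem_range_self n) (image_subset_range f _)

section Pivot

variable {𝕜 ι : Type*}

def IsNewPivot [Field 𝕜] {E : Submodule 𝕜 (ι → 𝕜)} (S : Set (E × ι)) (p : E × ι) : Prop :=
  (p.1 : ι → 𝕜) p.2 = 1 ∧ ∀ q ∈ S, (p.1 : ι → 𝕜) q.2 = 0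

theorem exists_isNewPivot_of_dense [NontriviallyNormedField 𝕜] [CompleteSpace 𝕜] [Infinite ι]
    {E : Submodule 𝕜 (ι → 𝕜)} (hE : Dense (E : Set (ι → 𝕜))) {S : Set (E × ι)}
    (hS : S.Finite) (j : ι) : ∃ p, IsNewPivot S p ∧ j ∈ Prod.snd '' insert p S := by
  obtain ⟨x, hxE, a, hxa, hx0, hja⟩ :=
    exists_mem_pivot_of_dense hE (hS.image Prod.snd).toFinset j
  refine ⟨(⟨x, hxE⟩, a), ⟨hxa, fun q hq => hx0 _ ?_⟩, ?_⟩
  · exact (hS.image _).mem_toFinset.2 (mem_image_of_mem _ hq)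
  rw [image_insert_eq]
  simpa [eq_comm (a := a)] using hja

def TriangularStep [Field 𝕜] {E : Submodule 𝕜 (ι → 𝕜)} (e : ℕ → E) (target : ℕ ⊕ ι)
    (S : Set (E × ι)) (p : E × ι) : Prop :=
  IsNewPivot S p ∧ target.elim (fun m => e m ∈ span 𝕜 (Prod.fst '' insert p S))
    (fun j => j ∈ Prod.snd '' insert p S)

theorem exists_triangularStep [NontriviallyNormedField 𝕜] [CompleteSpace 𝕜] [Infinite ι]
    {E : Submodule 𝕜 (ι → 𝕜)} (hE : Dense (E : Set (ι → 𝕜))) (e : ℕ → E) (target : ℕ ⊕ ι)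
    (f : ℕ → E × ι) (n : ℕ) (h1 : ∀ k < n, ((f k).1 : ι → 𝕜) (f k).2 = 1)
    (h0 : ∀ k < n, ∀ i < k, ((f k).1 : ι → 𝕜) (f i).2 = 0) :
    ∃ p, TriangularStep e target (f '' Iio n) p := by
  have hfin : (f '' Iio n).Finite := (finite_Iio n).image f
  cases target with
  | inr j => exact exists_isNewPivot_of_dense hE hfin j
  | inl m =>
    have hfst : ∀ p : E × ι, Prod.fst '' insert p (f '' Iio n) =
        insert p.1 ((fun k => (f k).1) '' Iio n) := by
      simp [image_insert_eq, image_image]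
    simp only [TriangularStep, Sum.elim_inl, hfst]
    obtain ⟨w, hw, hw0⟩ := exists_sub_mem_span_forall_dual_eq_zero
      (f := fun k => (LinearMap.proj (f k).2).comp E.subtype) h1 h0 (e m)
    by_cases hw_zero : w = 0
    · obtain ⟨p, hp, -⟩ := exists_isNewPivot_of_dense hE hfin (Classical.arbitrary ι)
      rw [hw_zero, sub_zero] at hw
      exact ⟨p, hp, span_mono (subset_insert _ _) hw⟩
    · obtain ⟨c, hc⟩ := Function.ne_iff.1 (E.coe_eq_zero.not.2 hw_zero)
      refine ⟨(((w : ι → 𝕜) c)⁻¹ • w, c), ⟨?_, forall_mem_image.2 fun k hk => ?_⟩, ?_⟩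
      · simpa using inv_mul_cancel₀ hc
      · simpa using Or.inr (hw0 k hk)
      · have hw_mem := smul_mem (span 𝕜 (insert (((w : ι → 𝕜) c)⁻¹ • w)
          ((fun k => (f k).1) '' Iio n))) ((w : ι → 𝕜) c) (subset_span (mem_insert _ _))
        rw [smul_inv_smul₀ hc] at hw_mem
        simpa using add_mem (span_mono (subset_insert _ _) hw) hw_mem

theorem exists_seq_triangularStep [NontriviallyNormedField 𝕜] [CompleteSpace 𝕜] [Infinite ι]
    {E : Submodule 𝕜 (ι → 𝕜)} (hE : Dense (E : Set (ι → 𝕜))) (e : ℕ → E)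
    (target : ℕ → ℕ ⊕ ι) : ∃ f : ℕ → E × ι, ∀ n, TriangularStep e (target n) (f '' Iio n) (f n) :=
  exists_seq_of_forall_exists_image_Iio _ fun n f hf =>
    exists_triangularStep hE e (target n) f n (fun k hk => (hf k hk).1.1)
      fun k hk _ hi => (hf k hk).1.2 _ (mem_image_of_mem f hi)

section Seq

variable [Field 𝕜] {E : Submodule 𝕜 (ι → 𝕜)} {e : ℕ → E} {target : ℕ → ℕ ⊕ ι}
  {f : ℕ → E × ι}

theorem mem_span_of_triangularStep (hf : ∀ n, TriangularStep e (target n) (f '' Iio n) (f n))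
    (htarget : target.Surjective) (m : ℕ) : e m ∈ span 𝕜 (range fun n => (f n).1) := by
  obtain ⟨n, hn⟩ := htarget (.inl m)
  have hm := (hf n).2
  rw [hn, Sum.elim_inl] at hm
  exact span_mono ((image_mono (insert_image_Iio_subset_range f n)).trans
    (range_comp _ _).symm.subset) hm

theorem surjective_of_triangularStep (hf : ∀ n, TriangularStep e (target n) (f '' Iio n) (f n))
    (htarget : target.Surjective) : (fun n => (f n).2).Surjective := fun j => by
  obtain ⟨n, hn⟩ := htarget (.inr j)
  have hj := (hf n).2
  rw [hn, Sum.elim_inr] at hj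
  obtain ⟨_, hp, rfl⟩ := hj
  obtain ⟨k, rfl⟩ := insert_image_Iio_subset_range f n hp
  exact ⟨k, rfl⟩

end Seq

end Pivot

/-- Lemma wow: every dense countably infinite-dimensional linear subspace
`E` of `ω = 𝕜^ℕ` has a Hamel basis `(vₙ)` and a bijection `α : ℕ → ℕ` such that
`δ_{α(n)}(vₙ) = 1` and `δ_{α(k)}(vₙ) = 0` for `k < n`. -/
theorem dense_subspace_of_omega_triangular_basis
    (𝕜 : Type*) [RCLike 𝕜]
    (E : Submodule 𝕜 (ℕ → 𝕜)) (hE : Dense (E : Set (ℕ → 𝕜)))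
    (hdim : Nonempty (Module.Basis ℕ 𝕜 E)) :
    ∃ (v : Module.Basis ℕ 𝕜 E) (α : ℕ → ℕ), Function.Bijective α ∧
      (∀ n : ℕ, ((v n : ℕ → 𝕜)) (α n) = 1) ∧
      (∀ n k : ℕ, k < n → ((v n : ℕ → 𝕜)) (α k) = 0) := by
  obtain ⟨e⟩ := hdim
  let target : ℕ ≃ ℕ ⊕ ℕ := Equiv.natSumNatEquivNat.symm
  obtain ⟨f, hf⟩ := exists_seq_triangularStep hE e target
  have h1 : ∀ n, ((f n).1 : ℕ → 𝕜) (f n).2 = 1 := fun n => (hf n).1.1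
  have h0 : ∀ n k, k < n → ((f n).1 : ℕ → 𝕜) (f k).2 = 0 :=
    fun n k hk => (hf n).1.2 _ (mem_image_of_mem f hk)
  have hli := linearIndependent_of_dual_triangular
    (f := fun n => (LinearMap.proj (f n).2).comp E.subtype) h1 h0
  have hspan : ⊤ ≤ span 𝕜 (range fun n => (f n).1) := by
    rw [← e.span_eq, span_le, range_subset_iff]
    exact mem_span_of_triangularStep hf target.surjective
  have hinj : (fun n => (f n).2).Injective := .of_lt_imp_ne fun k n hkn hα => by
    simpa [hα, h1] using h0 n k hkn
  exact ⟨.mk hli hspan, fun n => (f n).2,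
    ⟨hinj, surjective_of_triangularStep hf target.surjective⟩, by simpa using h1, by simpa using h0⟩
end

section
/- Let X be a sequentially complete locally convex topological vector space over 𝕂 (𝕂 = ℝ or ℂ) and (xₙ)_{n∈ℤ₊} a sequence in X with xₙ → 0. Then the set K = { Σ_{n=0}^{∞} aₙxₙ : a ∈ ℓ¹, ‖a‖₁ ≤ 1 } is a Banach disk in X (in fact K is compact, convex and balanced), and the linear span of {xₙ : n ∈ ℤ₊} is a dense subspace of the Banach space X_K, i.e. dense with respect to the norm p_K. -/
/-!
The map `a ↦ ∑ aₙ xₙ` is continuous on the `ℓ¹` unit ball with the (compact) product topology,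
because `xₙ → 0` makes the partial sums converge uniformly there; so `K` is compact, up to the
non-uniqueness of limits when `X` is not Hausdorff, which is handled in the separation quotient.
A closed bounded disk in a sequentially complete space is a Banach disk: a `p_K`-Cauchy sequence is
Cauchy in `X`, and its limit is a `p_K`-limit because the balls `ε • K` are closed. Density holds
on `K` since `∑ aₙ xₙ - ∑_{n<N} aₙ xₙ` is a tail sum lying in `(∑_{n≥N} |aₙ|) • K`, and spreads to
the span of `K` by subadditivity and homogeneity of the gauge.
-/

noncomputable section

open Filter Set Topology Pointwise

def IsSeqComplete (X : Type*) [UniformSpace X] : Prop :=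
  ∀ u : ℕ → X, CauchySeq u → ∃ l : X, Tendsto u atTop (𝓝 l)

section l1Ball

variable {𝕜 ι : Type*} [RCLike 𝕜]

/-- The closed unit ball of `ℓ¹(ι, 𝕜)`, described by finite partial sums so that it is visibly
closed in the product topology. -/
def l1Ball (𝕜 ι : Type*) [RCLike 𝕜] : Set (ι → 𝕜) :=
  {a | ∀ t : Finset ι, ∑ i ∈ t, ‖a i‖ ≤ 1}

theorem mem_l1Ball_iff {a : ι → 𝕜} :
    a ∈ l1Ball 𝕜 ι ↔ (Summable fun i => ‖a i‖) ∧ ∑' i, ‖a i‖ ≤ 1 := by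
  refine ⟨fun h => ?_, fun h t => (h.1.sum_le_tsum t fun i _ => norm_nonneg _).trans h.2⟩
  have hs : Summable fun i => ‖a i‖ := summable_of_sum_le (fun i => norm_nonneg (a i)) h
  exact ⟨hs, hs.tsum_le_of_sum_le h⟩

theorem isCompact_l1Ball : IsCompact (l1Ball 𝕜 ι) := by
  have hclosed : IsClosed (l1Ball 𝕜 ι) := by
    simp only [l1Ball, ofPred_forall]
    exact isClosed_iInter fun t => isClosed_le
      (continuous_finsetSum t fun i _ => (continuous_apply i).norm) continuous_const
  refine (isCompact_univ_pi fun _ => isCompact_closedBall (0 : 𝕜) 1).of_isClosed_subset hclosed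
    fun a ha i _ => ?_
  simpa using ha {i}

theorem smul_mem_l1Ball {c : 𝕜} (hc : ‖c‖ ≤ 1) {a : ι → 𝕜} (ha : a ∈ l1Ball 𝕜 ι) :
    c • a ∈ l1Ball 𝕜 ι := fun t => by
  simp only [Pi.smul_apply, smul_eq_mul, norm_mul, ← Finset.mul_sum]
  exact mul_le_one₀ hc (Finset.sum_nonneg fun _ _ => norm_nonneg _) (ha t)

theorem convex_l1Ball : Convex ℝ (l1Ball 𝕜 ι) := by
  intro a ha b hb s t hs ht hst u
  calc ∑ i ∈ u, ‖(s • a + t • b) i‖ ≤ ∑ i ∈ u, (s * ‖a i‖ + t * ‖b i‖) :=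
        Finset.sum_le_sum fun i _ => (norm_add_le _ _).trans_eq <| by
          simp [norm_smul, abs_of_nonneg hs, abs_of_nonneg ht]
    _ = s * ∑ i ∈ u, ‖a i‖ + t * ∑ i ∈ u, ‖b i‖ := by
        rw [Finset.sum_add_distrib, Finset.mul_sum, Finset.mul_sum]
    _ ≤ s * 1 + t * 1 := by gcongr; exacts [ha u, hb u]
    _ = 1 := by rw [mul_one, mul_one, hst]

theorem single_mem_l1Ball [DecidableEq ι] (i : ι) : Pi.single i 1 ∈ l1Ball 𝕜 ι := fun t => by
  have : ∀ j, ‖(Pi.single i 1 : ι → 𝕜) j‖ = (Pi.single i 1 : ι → ℝ) j := fun j => by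
    by_cases h : j = i <;> simp [h]
  simp only [this, Finset.sum_pi_single']
  split_ifs <;> norm_num

end l1Ball

section Disk

variable {𝕜 E : Type*} [RCLike 𝕜] [AddCommGroup E] [Module 𝕜 E] [Module ℝ E]
  [IsScalarTower ℝ 𝕜 E] {D : Set E}

theorem real_smul_set_eq_coe_smul_set (r : ℝ) (D : Set E) : r • D = (r : 𝕜) • D := by
  simp_rw [← Set.image_smul, RCLike.real_smul_eq_coe_smul (K := 𝕜)]

theorem sum_smul_mem_smul_of_balanced_convex (hconv : Convex ℝ D) (hbal : Balanced 𝕜 D)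
    (h0 : (0 : E) ∈ D) {ι : Type*} (t : Finset ι) {a : ι → 𝕜} {v : ι → E}
    (hv : ∀ i ∈ t, v i ∈ D) : ∑ i ∈ t, a i • v i ∈ (∑ i ∈ t, ‖a i‖) • D := by
  classical
  induction t using Finset.induction_on with
  | empty => simp [zero_smul_set ⟨0, h0⟩]
  | insert j t hj ih =>
    rw [Finset.sum_insert hj, Finset.sum_insert hj,
      hconv.add_smul (norm_nonneg _) (Finset.sum_nonneg fun _ _ => norm_nonneg _)]
    refine add_mem_add ?_ (ih fun i hi => hv i (Finset.mem_insert_of_mem hi))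
    rw [real_smul_set_eq_coe_smul_set (𝕜 := 𝕜), ← hbal.smul_congr (a := a j) (by simp)]
    exact smul_mem_smul_set (hv j (Finset.mem_insert_self j t))

theorem sum_smul_mem_of_balanced_convex (hconv : Convex ℝ D) (hbal : Balanced 𝕜 D)
    (h0 : (0 : E) ∈ D) {ι : Type*} {t : Finset ι} {a : ι → 𝕜} {v : ι → E}
    (hv : ∀ i ∈ t, v i ∈ D) (ha : ∑ i ∈ t, ‖a i‖ ≤ 1) : ∑ i ∈ t, a i • v i ∈ D := by
  have h := sum_smul_mem_smul_of_balanced_convex hconv hbal h0 t (a := a) hv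
  rw [real_smul_set_eq_coe_smul_set (𝕜 := 𝕜)] at h
  refine hbal _ ?_ h
  rw [RCLike.norm_ofReal, abs_of_nonneg (Finset.sum_nonneg fun _ _ => norm_nonneg _)]
  exact ha

end Disk

section Gauge

variable {E : Type*} [AddCommGroup E] [Module ℝ E] {s : Set E} {x y : E} {a : ℝ}

theorem exists_lt_of_gauge_lt_of_mem_smul (hx : ∃ r : ℝ, 0 < r ∧ x ∈ r • s) (h : gauge s x < a) :
    ∃ b, 0 < b ∧ b < a ∧ x ∈ b • s := by
  obtain ⟨b, ⟨hb, hxb⟩, hba⟩ := exists_lt_of_csInf_lt hx h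
  exact ⟨b, hb, hba, hxb⟩

theorem mem_smul_of_gauge_lt (hconv : Convex ℝ s) (h0 : (0 : E) ∈ s)
    (hx : ∃ r : ℝ, 0 < r ∧ x ∈ r • s) (h : gauge s x < a) : x ∈ a • s := by
  obtain ⟨b, hb, hba, z, hz, rfl⟩ := exists_lt_of_gauge_lt_of_mem_smul hx h
  have ha : 0 < a := hb.trans hba
  refine ⟨(b / a) • z, hconv.smul_mem_of_zero_mem h0 hz ⟨by positivity, ?_⟩, ?_⟩
  · exact (div_le_one ha).2 hba.le
  · show a • (b / a) • z = b • z
    rw [smul_smul, mul_div_cancel₀ _ ha.ne']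

theorem gauge_add_le_of_mem_smul (hconv : Convex ℝ s) (hx : ∃ r : ℝ, 0 < r ∧ x ∈ r • s)
    (hy : ∃ r : ℝ, 0 < r ∧ y ∈ r • s) : gauge s (x + y) ≤ gauge s x + gauge s y := by
  refine le_of_forall_pos_lt_add fun ε hε => ?_
  obtain ⟨a, ha, ha', x, hx', rfl⟩ :=
    exists_lt_of_gauge_lt_of_mem_smul hx (lt_add_of_pos_right (gauge s x) (half_pos hε))
  obtain ⟨b, hb, hb', y, hy', rfl⟩ :=
    exists_lt_of_gauge_lt_of_mem_smul hy (lt_add_of_pos_right (gauge s y) (half_pos hε))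
  calc
    gauge s (a • x + b • y) ≤ a + b := gauge_le_of_mem (by positivity) <| by
      rw [hconv.add_smul ha.le hb.le]
      exact Set.add_mem_add (smul_mem_smul_set hx') (smul_mem_smul_set hy')
    _ < gauge s (a • x) + gauge s (b • y) + ε := by linarith

end Gauge

section Span

variable {𝕜 E : Type*} [RCLike 𝕜] [AddCommGroup E] [Module 𝕜 E] [Module ℝ E]
  [IsScalarTower ℝ 𝕜 E] {D : Set E}

theorem smul_subset_span (r : ℝ) (D : Set E) : r • D ⊆ Submodule.span 𝕜 D := by
  rintro _ ⟨d, hd, rfl⟩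
  show r • d ∈ _
  rw [RCLike.real_smul_eq_coe_smul (K := 𝕜)]
  exact Submodule.smul_mem _ _ (Submodule.subset_span hd)

theorem exists_pos_mem_smul_of_mem_span_s15 (hconv : Convex ℝ D) (hbal : Balanced 𝕜 D)
    (h0 : (0 : E) ∈ D) {y : E} (hy : y ∈ Submodule.span 𝕜 D) : ∃ r : ℝ, 0 < r ∧ y ∈ r • D := by
  induction hy using Submodule.span_induction with
  | mem y hy => exact ⟨1, one_pos, by rwa [one_smul]⟩
  | zero => exact ⟨1, one_pos, by rwa [one_smul]⟩
  | add y z _ _ hy hz =>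
    obtain ⟨r, hr, hy⟩ := hy
    obtain ⟨s, hs, hz⟩ := hz
    exact ⟨r + s, add_pos hr hs, hconv.add_smul hr.le hs.le ▸ Set.add_mem_add hy hz⟩
  | smul c y _ hy =>
    obtain ⟨r, hr, hy⟩ := hy
    refine ⟨r * (‖c‖ + 1), by positivity, ?_⟩
    have hc : c • D ⊆ (‖c‖ + 1) • D := by
      rw [real_smul_set_eq_coe_smul_set (𝕜 := 𝕜)]
      refine hbal.smul_mono ?_
      rw [RCLike.norm_ofReal, abs_of_pos (by positivity)]
      linarith
    rw [← smul_smul]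
    refine smul_set_mono (a := r) hc ?_
    rw [smul_comm r c D]
    exact smul_mem_smul_set hy

theorem exists_gauge_sub_lt_of_mem_span (hconv : Convex ℝ D) (hbal : Balanced 𝕜 D)
    (h0 : (0 : E) ∈ D) {M : Submodule 𝕜 E} (hM : M ≤ Submodule.span 𝕜 D)
    (hD : ∀ d ∈ D, ∀ ε > 0, ∃ z ∈ M, gauge D (d - z) < ε) {y : E}
    (hy : y ∈ Submodule.span 𝕜 D) : ∀ ε > 0, ∃ z ∈ M, gauge D (y - z) < ε := by
  induction hy using Submodule.span_induction with
  | mem d hd => exact hD d hd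
  | zero => exact fun ε hε => ⟨0, M.zero_mem, by rwa [sub_zero, gauge_zero]⟩
  | add y z hy hz ihy ihz =>
    intro ε hε
    obtain ⟨y', hy', hyε⟩ := ihy (ε / 2) (half_pos hε)
    obtain ⟨z', hz', hzε⟩ := ihz (ε / 2) (half_pos hε)
    refine ⟨y' + z', M.add_mem hy' hz', ?_⟩
    have hsub : ∀ {w w'}, w ∈ Submodule.span 𝕜 D → w' ∈ M → ∃ r : ℝ, 0 < r ∧ w - w' ∈ r • D :=
      fun hw hw' => exists_pos_mem_smul_of_mem_span_s15 hconv hbal h0 (sub_mem hw (hM hw'))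
    calc gauge D (y + z - (y' + z')) = gauge D ((y - y') + (z - z')) := by abel_nf
      _ ≤ gauge D (y - y') + gauge D (z - z') :=
          gauge_add_le_of_mem_smul hconv (hsub hy hy') (hsub hz hz')
      _ < ε := by linarith
  | smul c y _ ih =>
    intro ε hε
    obtain ⟨z, hz, hzε⟩ := ih (ε / (‖c‖ + 1)) (by positivity)
    refine ⟨c • z, M.smul_mem c hz, ?_⟩
    rw [← smul_sub, gauge_smul hbal]
    calc ‖c‖ * gauge D (y - z) ≤ ‖c‖ * (ε / (‖c‖ + 1)) := by gcongr
      _ < ε := by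
        rw [mul_div_assoc', div_lt_iff₀ (by positivity)]
        nlinarith

end Span

section LocallyConvex

variable {𝕜 X : Type*} [RCLike 𝕜] [AddCommGroup X] [Module 𝕜 X] [Module ℝ X]
  [IsScalarTower ℝ 𝕜 X]

theorem Convex.balancedCore {W : Set X} (hW : Convex ℝ W) (h0 : (0 : X) ∈ W) :
    Convex ℝ (balancedCore 𝕜 W) := by
  rw [balancedCore_eq_iInter h0]
  exact convex_iInter₂ fun r _ => hW.linear_image (DistribSMul.toLinearMap ℝ X r)

variable [TopologicalSpace X] [IsTopologicalAddGroup X] [ContinuousSMul 𝕜 X]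

variable (𝕜 X) in
theorem nhds_zero_hasBasis_isClosed_balanced_convex [LocallyConvexSpace ℝ X] :
    (𝓝 (0 : X)).HasBasis
      (fun V => V ∈ 𝓝 (0 : X) ∧ IsClosed V ∧ Balanced 𝕜 V ∧ Convex ℝ V) id := by
  have := IsScalarTower.continuousSMul (M := ℝ) 𝕜 (α := X)
  refine ⟨fun t => ⟨fun ht => ?_, fun ⟨V, hV, hVt⟩ => mem_of_superset hV.1 hVt⟩⟩
  obtain ⟨W, ⟨hW, hWc, -, hWconv⟩, hWt⟩ := (nhds_hasBasis_absConvex_closed ℝ X).mem_iff.1 ht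
  exact ⟨balancedCore 𝕜 W, ⟨balancedCore_mem_nhds_zero hW, hWc.balancedCore,
    balancedCore_balanced W, hWconv.balancedCore (mem_of_mem_nhds hW)⟩,
    (balancedCore_subset W).trans hWt⟩

end LocallyConvex

section BanachDisk

variable {𝕜 X : Type*} [RCLike 𝕜] [AddCommGroup X] [Module 𝕜 X] [Module ℝ X]
  [IsScalarTower ℝ 𝕜 X] [UniformSpace X] [IsUniformAddGroup X] {D : Set X}

theorem cauchySeq_of_sub_mem_smul (hb : Bornology.IsVonNBounded 𝕜 D) {u : ℕ → X}
    (hu : ∀ ε : ℝ, 0 < ε → ∃ N, ∀ m ≥ N, ∀ n ≥ N, u m - u n ∈ ε • D) : CauchySeq u := by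
  rw [cauchySeq_iff_tendsto, uniformity_eq_comap_nhds_zero X, tendsto_comap_iff]
  intro V hV
  obtain ⟨ε, hε, hεV⟩ := Metric.eventually_nhds_iff.1
    (hb.tendsto_smallSets_nhds.eventually (eventually_smallSets_subset.2 hV))
  obtain ⟨N, hN⟩ := hu (ε / 2) (half_pos hε)
  refine eventually_atTop.2 ⟨(N, N), fun p hp => hεV (y := ((ε / 2 : ℝ) : 𝕜)) ?_ ?_⟩
  · rw [dist_zero_right, RCLike.norm_ofReal, abs_of_pos (half_pos hε)]
    exact half_lt_self hε
  · rw [← real_smul_set_eq_coe_smul_set]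
    exact hN p.2 hp.2 p.1 hp.1

theorem isBanachDisk_of_isClosed [ContinuousConstSMul 𝕜 X] (hseq : IsSeqComplete X)
    (hb : Bornology.IsVonNBounded 𝕜 D) (hcl : IsClosed D) (hconv : Convex ℝ D)
    (hbal : Balanced 𝕜 D) (h0 : (0 : X) ∈ D) : IsBanachDisk 𝕜 D := by
  refine ⟨hb, hconv, hbal, fun u hu hcau => ?_⟩
  have hsmall (ε : ℝ) (hε : 0 < ε) : ∃ N, ∀ m ≥ N, ∀ n ≥ N, u m - u n ∈ ε • D := by
    obtain ⟨N, hN⟩ := hcau ε hε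
    exact ⟨N, fun m hm n hn => mem_smul_of_gauge_lt hconv h0
      (exists_pos_mem_smul_of_mem_span_s15 hconv hbal h0 (sub_mem (hu m) (hu n))) (hN m hm n hn)⟩
  obtain ⟨y, hy⟩ := hseq u (cauchySeq_of_sub_mem_smul hb hsmall)
  have hlim (ε : ℝ) (hε : 0 < ε) : ∃ N, ∀ n ≥ N, y - u n ∈ ε • D := by
    obtain ⟨N, hN⟩ := hsmall ε hε
    have hclε : IsClosed (ε • D) := by
      rw [real_smul_set_eq_coe_smul_set (𝕜 := 𝕜)]
      exact hcl.smul_of_ne_zero (RCLike.ofReal_ne_zero.2 hε.ne')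
    exact ⟨N, fun n hn => hclε.mem_of_tendsto (hy.sub_const (u n))
      (eventually_atTop.2 ⟨N, fun m hm => hN m hm n hn⟩)⟩
  obtain ⟨N, hN⟩ := hlim 1 one_pos
  refine ⟨y, by simpa using add_mem (hu N) (smul_subset_span 1 D (hN N le_rfl)), ?_⟩
  refine tendsto_order.2 ⟨fun a ha => .of_forall fun n => ha.trans_le (gauge_nonneg _),
    fun a ha => ?_⟩
  obtain ⟨N, hN⟩ := hlim (a / 2) (half_pos ha)
  exact eventually_atTop.2 ⟨N, fun n hn =>
    (gauge_le_of_mem (half_pos ha).le (hN n hn)).trans_lt (half_lt_self ha)⟩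

end BanachDisk

section Series

variable {𝕜 X : Type*} [RCLike 𝕜] [AddCommGroup X] [UniformSpace X]

theorem summable_of_cauchySeq_finset (hseq : IsSeqComplete X) {f : ℕ → X}
    (hf : CauchySeq fun s : Finset ℕ => ∑ n ∈ s, f n) : Summable f := by
  obtain ⟨l, hl⟩ := hseq _ (hf.comp_tendsto tendsto_finset_range)
  exact ⟨l, tendsto_nhds_of_cauchySeq_of_subseq hf tendsto_finset_range hl⟩

variable [Module 𝕜 X] [Module ℝ X] [IsScalarTower ℝ 𝕜 X] {x : ℕ → X}

theorem exists_sum_smul_mem_of_tendsto_zero (hx : Tendsto x atTop (𝓝 0)) {V : Set X}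
    (hV : V ∈ 𝓝 0) (hconv : Convex ℝ V) (hbal : Balanced 𝕜 V) :
    ∃ N, ∀ a ∈ l1Ball 𝕜 ℕ, ∀ t : Finset ℕ, Disjoint t (Finset.range N) →
      ∑ n ∈ t, a n • x n ∈ V := by
  obtain ⟨N, hN⟩ := eventually_atTop.1 (hx hV)
  refine ⟨N, fun a ha t ht => sum_smul_mem_of_balanced_convex hconv hbal (mem_of_mem_nhds hV)
    (fun n hn => hN n ?_) (ha t)⟩
  simpa using Finset.disjoint_left.1 ht hn

variable [IsUniformAddGroup X] [ContinuousSMul 𝕜 X] [LocallyConvexSpace ℝ X]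

theorem summable_smul_of_mem_l1Ball (hseq : IsSeqComplete X) (hx : Tendsto x atTop (𝓝 0))
    {a : ℕ → 𝕜} (ha : a ∈ l1Ball 𝕜 ℕ) :
    Summable fun n => a n • x n := by
  refine summable_of_cauchySeq_finset hseq (cauchySeq_finset_iff_sum_vanishing.2 fun e he => ?_)
  obtain ⟨V, ⟨hV, -, hbal, hconv⟩, hVe⟩ :=
    (nhds_zero_hasBasis_isClosed_balanced_convex 𝕜 X).mem_iff.1 he
  obtain ⟨N, hN⟩ := exists_sum_smul_mem_of_tendsto_zero hx hV hconv hbal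
  exact ⟨Finset.range N, fun t ht => hVe (hN a ha t ht)⟩

theorem tendstoUniformlyOn_sum_range_smul (hseq : IsSeqComplete X) (hx : Tendsto x atTop (𝓝 0)) :
    TendstoUniformlyOn (fun N (a : ℕ → 𝕜) => ∑ n ∈ Finset.range N, a n • x n)
      (fun a => ∑' n, a n • x n) atTop (l1Ball 𝕜 ℕ) := by
  intro U hU
  rw [uniformity_eq_comap_nhds_zero X] at hU
  obtain ⟨W, hW, hWU⟩ := hU
  obtain ⟨V, ⟨hV, hcl, hbal, hconv⟩, hVW⟩ :=
    (nhds_zero_hasBasis_isClosed_balanced_convex 𝕜 X).mem_iff.1 hW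
  obtain ⟨N, hN⟩ := exists_sum_smul_mem_of_tendsto_zero hx hV hconv hbal
  refine eventually_atTop.2 ⟨N, fun M hM a ha => hWU (hVW ?_)⟩
  show ∑ n ∈ Finset.range M, a n • x n - ∑' n, a n • x n ∈ V
  rw [← neg_sub, hbal.neg_mem_iff]
  refine hcl.mem_of_tendsto
    ((summable_smul_of_mem_l1Ball hseq hx ha).hasSum.tendsto_sum_nat.sub_const _)
    (eventually_atTop.2 ⟨M, fun K hK => ?_⟩)
  rw [← Finset.sum_sdiff (Finset.range_subset_range.2 hK), add_sub_cancel_right]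
  exact hN a ha _ (Finset.disjoint_of_subset_right (Finset.range_subset_range.2 hM)
    Finset.sdiff_disjoint)

theorem continuousOn_tsum_smul (hseq : IsSeqComplete X) (hx : Tendsto x atTop (𝓝 0)) :
    ContinuousOn (fun a : ℕ → 𝕜 => ∑' n, a n • x n) (l1Ball 𝕜 ℕ) :=
  (tendstoUniformlyOn_sum_range_smul hseq hx).continuousOn <| .of_forall fun _ =>
    (continuous_finsetSum _ fun n _ => (continuous_apply n).smul continuous_const).continuousOn

end Series

section l1Hull

variable {𝕜 X : Type*} [RCLike 𝕜] [AddCommGroup X] [Module 𝕜 X] [TopologicalSpace X]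

variable (𝕜) in
def l1Hull (x : ℕ → X) : Set X :=
  {y | ∃ a ∈ l1Ball 𝕜 ℕ, HasSum (fun n => a n • x n) y}

theorem range_subset_l1Hull (x : ℕ → X) : range x ⊆ l1Hull 𝕜 x := by
  classical
  rintro _ ⟨m, rfl⟩
  refine ⟨Pi.single m 1, single_mem_l1Ball m, ?_⟩
  simpa using hasSum_single (f := fun n => (Pi.single m 1 : ℕ → 𝕜) n • x n) m
    fun n hn => by simp [hn]

variable [ContinuousConstSMul 𝕜 X]

theorem balanced_l1Hull (x : ℕ → X) : Balanced 𝕜 (l1Hull 𝕜 x) := by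
  rintro c hc _ ⟨y, ⟨a, ha, hy⟩, rfl⟩
  refine ⟨c • a, smul_mem_l1Ball hc ha, ?_⟩
  simpa [mul_smul] using hy.const_smul c

variable [Module ℝ X] [IsScalarTower ℝ 𝕜 X] [IsTopologicalAddGroup X]

theorem convex_l1Hull (x : ℕ → X) : Convex ℝ (l1Hull 𝕜 x) := by
  rintro y ⟨a, ha, hy⟩ z ⟨b, hb, hz⟩ s t hs ht hst
  refine ⟨s • a + t • b, convex_l1Ball ha hb hs ht hst, ?_⟩
  convert (hy.const_smul (s : 𝕜)).add (hz.const_smul (t : 𝕜)) using 1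
  · ext n
    simp only [Pi.add_apply, Pi.smul_apply, add_smul, smul_assoc,
      RCLike.real_smul_eq_coe_smul (K := 𝕜)]
  · simp only [RCLike.real_smul_eq_coe_smul (K := 𝕜)]

theorem sub_sum_range_mem_smul_l1Hull {x : ℕ → X} {a : ℕ → 𝕜} {y : X}
    (hy : HasSum (fun n => a n • x n) y) {N : ℕ} {r : ℝ} (hr : 0 < r)
    (htail : ∀ t : Finset ℕ, Disjoint t (Finset.range N) → ∑ n ∈ t, ‖a n‖ ≤ r) :
    y - ∑ n ∈ Finset.range N, a n • x n ∈ r • l1Hull 𝕜 x := by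
  set b : ℕ → 𝕜 := fun n => if n < N then 0 else a n
  have hb : HasSum (fun n => b n • x n) (y - ∑ n ∈ Finset.range N, a n • x n) := by
    have hhead := hasSum_sum_of_ne_finset_zero (L := .unconditional ℕ) (s := Finset.range N)
      (f := fun n => if n < N then a n • x n else 0) fun n hn => by simp_all
    rw [Finset.sum_congr rfl fun n hn => if_pos (Finset.mem_range.1 hn)] at hhead
    convert hy.sub hhead using 2 with n
    by_cases h : n < N <;> simp [b, h]
  refine ⟨(r⁻¹ : 𝕜) • (y - ∑ n ∈ Finset.range N, a n • x n), ⟨(r⁻¹ : 𝕜) • b, fun t => ?_,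
    by simpa [mul_smul] using hb.const_smul (r⁻¹ : 𝕜)⟩, ?_⟩
  · calc ∑ n ∈ t, ‖((r⁻¹ : 𝕜) • b) n‖ = r⁻¹ * ∑ n ∈ t.filter (fun n => ¬ n < N), ‖a n‖ := by
          rw [Finset.sum_filter, Finset.mul_sum]
          refine Finset.sum_congr rfl fun n _ => ?_
          by_cases h : n < N <;> simp [b, h, abs_of_pos hr]
      _ ≤ r⁻¹ * r := by
          gcongr
          exact htail _ (Finset.disjoint_left.2 fun n hn hn' =>
            (Finset.mem_filter.1 hn).2 (Finset.mem_range.1 hn'))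
      _ = 1 := inv_mul_cancel₀ hr.ne'
  · show r • (r⁻¹ : 𝕜) • _ = _
    rw [RCLike.real_smul_eq_coe_smul (K := 𝕜), smul_smul,
      mul_inv_cancel₀ (RCLike.ofReal_ne_zero.2 hr.ne'), one_smul]

theorem exists_gauge_sub_lt_of_mem_l1Hull {x : ℕ → X} {y : X} (hy : y ∈ l1Hull 𝕜 x) {ε : ℝ}
    (hε : 0 < ε) : ∃ z ∈ Submodule.span 𝕜 (range x), gauge (l1Hull 𝕜 x) (y - z) < ε := by
  obtain ⟨a, ha, hy⟩ := hy
  obtain ⟨s, hs⟩ := (mem_l1Ball_iff.1 ha).1.vanishing (Iio_mem_nhds (half_pos hε))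
  obtain ⟨N, hsN⟩ := Finset.exists_nat_subset_range s
  refine ⟨∑ n ∈ Finset.range N, a n • x n,
    Submodule.sum_mem _ fun n _ => Submodule.smul_mem _ _ (Submodule.subset_span ⟨n, rfl⟩), ?_⟩
  have htail := sub_sum_range_mem_smul_l1Hull hy (half_pos hε) fun t ht =>
    (hs t (ht.mono_right hsN)).le
  exact (gauge_le_of_mem (half_pos hε).le htail).trans_lt (half_lt_self hε)

end l1Hull

section Compactness

variable {𝕜 X : Type*} [RCLike 𝕜] [AddCommGroup X] [Module 𝕜 X] [Module ℝ X]
  [IsScalarTower ℝ 𝕜 X] [UniformSpace X] [IsUniformAddGroup X] [ContinuousSMul 𝕜 X]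
  [LocallyConvexSpace ℝ X] {x : ℕ → X}

theorem l1Hull_eq_preimage_mk (hseq : IsSeqComplete X) (hx : Tendsto x atTop (𝓝 0)) :
    l1Hull 𝕜 x = SeparationQuotient.mk ⁻¹'
      ((fun a : ℕ → 𝕜 => SeparationQuotient.mk (∑' n, a n • x n)) '' l1Ball 𝕜 ℕ) := by
  ext y
  constructor
  · rintro ⟨a, ha, hy⟩
    exact ⟨a, ha, SeparationQuotient.mk_eq_mk.2 <|
      tendsto_nhds_unique_inseparable (summable_smul_of_mem_l1Ball hseq hx ha).hasSum hy⟩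
  · rintro ⟨a, ha, hay⟩
    refine ⟨a, ha, ?_⟩
    unfold HasSum
    rw [← (SeparationQuotient.mk_eq_mk.1 hay).nhds_eq]
    exact (summable_smul_of_mem_l1Ball hseq hx ha).hasSum

theorem isCompact_image_mk_tsum (hseq : IsSeqComplete X) (hx : Tendsto x atTop (𝓝 0)) :
    IsCompact ((fun a : ℕ → 𝕜 => SeparationQuotient.mk (∑' n, a n • x n)) '' l1Ball 𝕜 ℕ) :=
  (isCompact_l1Ball (ι := ℕ)).image_of_continuousOn
    (SeparationQuotient.continuous_mk.comp_continuousOn (continuousOn_tsum_smul hseq hx))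

theorem isCompact_l1Hull (hseq : IsSeqComplete X) (hx : Tendsto x atTop (𝓝 0)) :
    IsCompact (l1Hull 𝕜 x) := by
  rw [l1Hull_eq_preimage_mk hseq hx]
  exact SeparationQuotient.isInducing_mk.isCompact_preimage
    (SeparationQuotient.range_mk (X := X) ▸ isClosed_univ) (isCompact_image_mk_tsum hseq hx)

theorem isClosed_l1Hull (hseq : IsSeqComplete X) (hx : Tendsto x atTop (𝓝 0)) :
    IsClosed (l1Hull 𝕜 x) := by
  rw [l1Hull_eq_preimage_mk hseq hx]
  exact (isCompact_image_mk_tsum hseq hx).isClosed.preimage SeparationQuotient.continuous_mk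

end Compactness

/-- Lemma l11: for a null sequence `(xₙ)` in a sequentially complete
locally convex space, the set `K` of sums `Σ aₙ xₙ` over `a ∈ ℓ¹`, `‖a‖₁ ≤ 1`, is a
(compact) Banach disk, and the linear span of `{xₙ}` is dense in the Banach space
`X_K`. -/
theorem banach_disk_from_null_sequence
    (𝕜 : Type*) [RCLike 𝕜] (X : Type*) [AddCommGroup X] [Module 𝕜 X]
    [Module ℝ X] [IsScalarTower ℝ 𝕜 X]
    -- X is a locally convex TVS
    [UniformSpace X] [IsUniformAddGroup X] [ContinuousSMul 𝕜 X]
    [LocallyConvexSpace ℝ X]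
    -- X is sequentially complete
    (hseq : ∀ u : ℕ → X, CauchySeq u → ∃ l : X, Filter.Tendsto u Filter.atTop (nhds l))
    -- a null sequence
    (x : ℕ → X) (hx : Filter.Tendsto x Filter.atTop (nhds 0))
    -- the set K = { Σ aₙ xₙ : a ∈ ℓ¹, ‖a‖₁ ≤ 1 }
    (K : Set X)
    (hK : K = {y : X | ∃ a : ℕ → 𝕜, (Summable fun n => ‖a n‖) ∧
      (∑' n, ‖a n‖) ≤ 1 ∧ HasSum (fun n => a n • x n) y}) :
    IsCompact K ∧ IsBanachDisk 𝕜 K ∧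
    ∀ y ∈ Submodule.span 𝕜 K, ∀ ε : ℝ, 0 < ε →
      ∃ z ∈ Submodule.span 𝕜 (Set.range x), gauge K (y - z) < ε := by
  obtain rfl : K = l1Hull 𝕜 x := hK.trans (by ext; simp [l1Hull, mem_l1Ball_iff, and_assoc])
  have hcomp := isCompact_l1Hull (𝕜 := 𝕜) hseq hx
  have hbal := balanced_l1Hull (𝕜 := 𝕜) x
  have hconv := convex_l1Hull (𝕜 := 𝕜) x
  have h0 : (0 : X) ∈ l1Hull 𝕜 x := hbal.zero_mem ⟨x 0, range_subset_l1Hull x ⟨0, rfl⟩⟩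
  refine ⟨hcomp, isBanachDisk_of_isClosed hseq (hcomp.isVonNBounded 𝕜)
    (isClosed_l1Hull hseq hx) hconv hbal h0, fun y hy => ?_⟩
  exact exists_gauge_sub_lt_of_mem_span hconv hbal h0
    (Submodule.span_mono (range_subset_l1Hull x))
    (fun _ hd _ => exists_gauge_sub_lt_of_mem_l1Hull hd) hy
end
end

section
/- Let p be a continuous seminorm on a locally convex topological vector space X over 𝕂 (𝕂 = ℝ or ℂ) and E a linear subspace of X of countably infinite dimension such that E ∩ ker p = {0}. Then there exist a Hamel basis (uₙ)_{n∈ℕ} of E and a sequence (fₙ)_{n∈ℕ} of continuous linear functionals on X with p*(fₙ) < ∞ for every n, such that fₙ(uₘ) = δ_{n,m} (Kronecker delta) for all n, m ∈ ℕ. -/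
/-!
Let `(eₙ)` be any Hamel basis of `E`. On the finite-dimensional space `span {e₀, …, eₙ}` the
seminorm `p` is a norm, so the coordinate functional of `eₙ` is bounded by a multiple of `p`, and
Hahn–Banach extends it to some `fₙ` on `X` with the same bound; thus `fₙ(eₘ) = δₙₘ` for `m ≤ n`.
This triangular system is made biorthogonal by a Gram–Schmidt-type correction of the basis,
`uₘ = eₘ - ∑_{k<m} fₖ(eₘ) uₖ`, which does not change the functionals.
-/

open Module Submodule Set
open scoped NNReal

section Biorthogonal

variable {R M : Type*} [CommRing R] [AddCommGroup M] [Module R M]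

theorem linearIndependent_of_biorthogonal {ι : Type*} [DecidableEq ι] {u : ι → M}
    (f : ι → M →ₗ[R] R) (hfu : ∀ i j, f i (u j) = if i = j then 1 else 0) :
    LinearIndependent R u := by
  refine LinearIndependent.of_comp (LinearMap.pi f) ?_
  have hpi : LinearMap.pi f ∘ u = fun j => Pi.single j 1 := by
    ext j i
    simp [hfu, Pi.single_apply]
  rw [hpi]
  exact Pi.linearIndependent_single_one ι R

noncomputable def biorthogonalize (e : ℕ → M) (f : ℕ → M →ₗ[R] R) : ℕ → M
  | m => e m - ∑ k : Fin m, f k (e m) • biorthogonalize e f k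

theorem biorthogonalize_eq (e : ℕ → M) (f : ℕ → M →ₗ[R] R) (m : ℕ) :
    biorthogonalize e f m = e m - ∑ k ∈ Finset.range m, f k (e m) • biorthogonalize e f k := by
  rw [biorthogonalize, Fin.sum_univ_eq_sum_range (fun k => f k (e m) • biorthogonalize e f k)]

theorem apply_biorthogonalize {e : ℕ → M} {f : ℕ → M →ₗ[R] R}
    (hf : ∀ n m, m ≤ n → f n (e m) = if n = m then 1 else 0) (n m : ℕ) :
    f n (biorthogonalize e f m) = if n = m then 1 else 0 := by
  induction m using Nat.strong_induction_on generalizing n with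
  | _ m ih =>
    have hsum : ∑ k ∈ Finset.range m, f k (e m) * f n (biorthogonalize e f k) =
        if n < m then f n (e m) else 0 := by
      rw [Finset.sum_congr rfl fun k hk => by
        rw [ih k (Finset.mem_range.1 hk) n, mul_ite, mul_one, mul_zero]]
      simp only [Finset.sum_ite_eq, Finset.mem_range]
    rw [biorthogonalize_eq, map_sub, map_sum]
    simp only [map_smul, smul_eq_mul, hsum]
    by_cases hnm : n < m
    · rw [if_pos hnm, if_neg hnm.ne, sub_self]
    · rw [if_neg hnm, sub_zero, hf n m (not_lt.1 hnm)]

theorem range_subset_span_biorthogonalize (e : ℕ → M) (f : ℕ → M →ₗ[R] R) :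
    range e ⊆ span R (range (biorthogonalize e f)) := by
  rintro _ ⟨m, rfl⟩
  have he : e m =
      biorthogonalize e f m + ∑ k ∈ Finset.range m, f k (e m) • biorthogonalize e f k := by
    rw [biorthogonalize_eq, sub_add_cancel]
  rw [he]
  exact add_mem (subset_span ⟨m, rfl⟩)
    (sum_mem fun k _ => smul_mem _ _ (subset_span ⟨k, rfl⟩))

theorem Module.Basis.exists_biorthogonal_of_triangular (e : Basis ℕ R M) (f : ℕ → M →ₗ[R] R)
    (hf : ∀ n m, m ≤ n → f n (e m) = if n = m then 1 else 0) :
    ∃ u : Basis ℕ R M, ∀ n m, f n (u m) = if n = m then 1 else 0 := by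
  have hu := apply_biorthogonalize hf
  have hspan : ⊤ ≤ span R (range (biorthogonalize e f)) := by
    rw [← e.span_eq]
    exact span_le.2 (range_subset_span_biorthogonalize e f)
  refine ⟨Basis.mk (linearIndependent_of_biorthogonal f hu) hspan, fun n m => ?_⟩
  rw [Basis.mk_apply]
  exact hu n m

end Biorthogonal

theorem Seminorm.exists_bound_of_finiteDimensional {𝕜 V : Type*} [NontriviallyNormedField 𝕜]
    [CompleteSpace 𝕜] [AddCommGroup V] [Module 𝕜 V] [FiniteDimensional 𝕜 V]
    (q : Seminorm 𝕜 V) (hq : ∀ x, q x = 0 → x = 0) (g : V →ₗ[𝕜] 𝕜) :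
    ∃ c : ℝ≥0, ∀ x, ‖g x‖ ≤ (c • q) x := by
  let : NormedAddCommGroup V :=
    AddGroupNorm.toNormedAddCommGroup { q.toAddGroupSeminorm with eq_zero_of_map_eq_zero' := hq }
  let : NormedSpace 𝕜 V := ⟨fun a x => (map_smul_eq_mul q a x).le⟩
  exact ⟨‖LinearMap.toContinuousLinearMap g‖₊, (LinearMap.toContinuousLinearMap g).le_opNorm⟩

theorem Seminorm.exists_continuous_extension_of_le {𝕜 X : Type*} [RCLike 𝕜] [AddCommGroup X]
    [Module 𝕜 X] [TopologicalSpace X] [IsTopologicalAddGroup X] {q : Seminorm 𝕜 X}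
    (hq : Continuous q) (F : Submodule 𝕜 X) (g : F →ₗ[𝕜] 𝕜) (hg : ∀ x, ‖g x‖ ≤ q x) :
    ∃ G : X →L[𝕜] 𝕜, (∀ x : F, G x = g x) ∧ ∀ x, ‖G x‖ ≤ q x := by
  obtain ⟨G, hGg, hGq⟩ := Module.Dual.exists_extension_of_le_seminorm F g hg
  have hG : Continuous G := (norm_withSeminorms 𝕜 𝕜).continuous_of_continuous_comp G fun _ =>
    Seminorm.continuous_of_le hq hGq
  exact ⟨⟨G, hG⟩, hGg, hGq⟩

theorem Seminorm.exists_dual_of_linearIndependent {𝕜 X ι : Type*} [RCLike 𝕜] [AddCommGroup X]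
    [Module 𝕜 X] [TopologicalSpace X] [IsTopologicalAddGroup X] [Finite ι] [DecidableEq ι]
    {p : Seminorm 𝕜 X} (hp : Continuous p) {v : ι → X} (hv : LinearIndependent 𝕜 v)
    (hvp : ∀ x ∈ span 𝕜 (range v), p x = 0 → x = 0) (i : ι) :
    ∃ f : X →L[𝕜] 𝕜, (∃ c : ℝ, ∀ x, ‖f x‖ ≤ c * p x) ∧
      ∀ j, f (v j) = if i = j then 1 else 0 := by
  have : FiniteDimensional 𝕜 (span 𝕜 (range v)) := .span_of_finite 𝕜 (finite_range v)
  let B := Basis.span hv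
  obtain ⟨c, hc⟩ := (p.comp (span 𝕜 (range v)).subtype).exists_bound_of_finiteDimensional
    (fun x hx => Subtype.ext (hvp x x.2 hx)) (B.coord i)
  obtain ⟨f, hfB, hfp⟩ := Seminorm.exists_continuous_extension_of_le (q := c • p)
    (hp.const_smul c) _ _ hc
  refine ⟨f, ⟨c, fun x => hfp x⟩, fun j => ?_⟩
  rw [show v j = B j from congrArg Subtype.val (Basis.span_apply hv j).symm, hfB,
    Basis.coord_apply, Basis.repr_self, Finsupp.single_apply]
  exact if_congr eq_comm rfl rfl

theorem exists_biorthogonal_system_general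
    (𝕜 : Type*) [RCLike 𝕜] (X : Type*) [AddCommGroup X] [Module 𝕜 X]
    [TopologicalSpace X] [IsTopologicalAddGroup X]
    -- p is a continuous seminorm on X
    (p : Seminorm 𝕜 X) (hp : Continuous p)
    -- E is a countably infinite-dimensional subspace with E ∩ ker p = {0}
    (E : Submodule 𝕜 X) (hdim : Nonempty (Module.Basis ℕ 𝕜 E))
    (hEp : ∀ x ∈ E, p x = 0 → x = 0) :
    ∃ (u : Module.Basis ℕ 𝕜 E) (f : ℕ → X →L[𝕜] 𝕜),
      (∀ n : ℕ, ∃ c : ℝ, ∀ x : X, ‖f n x‖ ≤ c * p x) ∧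
      ∀ n m : ℕ, f n (u m : X) = if n = m then 1 else 0 := by
  obtain ⟨e⟩ := hdim
  have htriangular : ∀ n, ∃ g : X →L[𝕜] 𝕜, (∃ c : ℝ, ∀ x, ‖g x‖ ≤ c * p x) ∧
      ∀ m ≤ n, g (e m) = if n = m then 1 else 0 := by
    intro n
    let v : Fin (n + 1) → X := fun j => e j
    have hv : LinearIndependent 𝕜 v :=
      (e.linearIndependent.map' E.subtype E.ker_subtype).comp _ Fin.val_injective
    have hvE : span 𝕜 (range v) ≤ E := span_le.2 (range_subset_iff.2 fun j => (e j).2)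
    obtain ⟨g, hgp, hg⟩ := Seminorm.exists_dual_of_linearIndependent hp hv
      (fun x hx => hEp x (hvE hx)) (Fin.last n)
    refine ⟨g, hgp, fun m hm => ?_⟩
    simpa [v, Fin.ext_iff] using hg ⟨m, Nat.lt_succ_of_le hm⟩
  choose f hfp hfe using htriangular
  obtain ⟨u, hu⟩ := e.exists_biorthogonal_of_triangular (fun n => (f n).toLinearMap ∘ₗ E.subtype) hfe
  exact ⟨u, f, hfp, hu⟩

/-- Lemma bububu: if `p` is a continuous seminorm on a locally convex
space `X` and `E` is a countably infinite-dimensional subspace of `X` with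
`E ∩ ker p = {0}`, then there are a Hamel basis `(uₙ)` of `E` and continuous linear
functionals `fₙ` on `X` with `p*(fₙ) < ∞` and `fₙ(uₘ) = δ_{n,m}`. -/
theorem exists_biorthogonal_system
    (𝕜 : Type*) [RCLike 𝕜] (X : Type*) [AddCommGroup X] [Module 𝕜 X]
    [Module ℝ X] [IsScalarTower ℝ 𝕜 X]
    -- X is a locally convex TVS
    [TopologicalSpace X] [IsTopologicalAddGroup X] [ContinuousSMul 𝕜 X]
    [LocallyConvexSpace ℝ X]
    -- p is a continuous seminorm on X
    (p : Seminorm 𝕜 X) (hp : Continuous p)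
    -- E is a countably infinite-dimensional subspace with E ∩ ker p = {0}
    (E : Submodule 𝕜 X) (hdim : Nonempty (Module.Basis ℕ 𝕜 E))
    (hEp : ∀ x ∈ E, p x = 0 → x = 0) :
    ∃ (u : Module.Basis ℕ 𝕜 E) (f : ℕ → X →L[𝕜] 𝕜),
      (∀ n : ℕ, ∃ c : ℝ, ∀ x : X, ‖f n x‖ ≤ c * p x) ∧
      ∀ n m : ℕ, f n (u m : X) = if n = m then 1 else 0 :=
  exists_biorthogonal_system_general 𝕜 X p hp E hdim hEp
end
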